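/- arXiv:2404.06843 — 7 statements merged into one kernel-verified Lean document; each statement's English description precedes it below -/
import Mathlib

section
/- Let G be a connected finite simple graph, x a Perron vector of G, and u* a vertex at which x attains its maximum. Suppose the induced subgraph G[N(u*)] contains no path on 6 vertices as a subgraph. Let H be a connected component of G[N(u*)] having at least two vertices, with minimum degree δ(H) ≥ 2. Then η(H) ≤ 0; moreover η(H) ≤ −1 if H is not isomorphic to K_5; η(H) ≤ −2 if H is isomorphic to neither K_5 nor K_5 − e; and η(H) ≤ −3 if H is not isomorphic to any of K_5, K_5 − e, K_4, or K_5 with two edges removed. -/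
open Matrix Finset

/-- The spectral radius of a finite simple graph: the largest (real) eigenvalue of its
adjacency matrix, expressed as the supremum of the set of real eigenvalues. -/
noncomputable def specRad {V : Type*} [Fintype V] (G : SimpleGraph V)
    [DecidableRel G.Adj] : ℝ :=
  sSup {t : ℝ | ∃ x : V → ℝ, x ≠ 0 ∧ (G.adjMatrix ℝ) *ᵥ x = t • x}

/-- `H` is contained in `G` as a (not necessarily induced) subgraph. -/
def ContainsSub {α β : Type*} (H : SimpleGraph α) (G : SimpleGraph β) : Prop :=
  ∃ f : α → β, Function.Injective f ∧ ∀ ⦃a b⦄, H.Adj a b → G.Adj (f a) (f b)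

/-- The fan graph `H₇ = K₁ ∨ P₆`: vertex `6` is joined to every vertex of the
path `0-1-2-3-4-5`. -/
def fanH7 : SimpleGraph (Fin 7) :=
  SimpleGraph.fromRel (fun i j => i = 6 ∨ j = 6 ∨ (j : ℕ) = (i : ℕ) + 1)

/-- A graph is `H₇`-free if it contains no subgraph isomorphic to the fan `H₇`. -/
def H7Free {β : Type*} (G : SimpleGraph β) : Prop := ¬ ContainsSub fanH7 G

/-- `K₃ ∨ kK₁`: the join of a triangle (vertices `0,1,2`) with `k` isolated vertices. -/
def K3Join (k : ℕ) : SimpleGraph (Fin (k + 3)) :=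
  SimpleGraph.fromRel (fun i j => (i : ℕ) < 3 ∨ (j : ℕ) < 3)

instance (k : ℕ) : DecidableRel (K3Join k).Adj := fun a b =>
  decidable_of_iff (a ≠ b ∧ ((a : ℕ) < 3 ∨ (b : ℕ) < 3)) (by
    rw [K3Join, SimpleGraph.fromRel_adj]; tauto)

/-- `K₂ ∨ tK₁`: the join of an edge (vertices `0,1`) with `t` isolated vertices. -/
def K2Join (t : ℕ) : SimpleGraph (Fin (t + 2)) :=
  SimpleGraph.fromRel (fun i j => (i : ℕ) < 2 ∨ (j : ℕ) < 2)

/-- The star `K_{1,s}`: vertex `0` joined to `s` independent vertices. -/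
def starGraph (s : ℕ) : SimpleGraph (Fin (s + 1)) :=
  SimpleGraph.fromRel (fun i j => i = 0 ∨ j = 0)

/-- `K₁ ∨ (K₃ ∪ tK₁)`: vertex `0` joined to all of a triangle `1,2,3` and to `t`
further vertices which are otherwise isolated. -/
def K1JoinK3Union (t : ℕ) : SimpleGraph (Fin (t + 4)) :=
  SimpleGraph.fromRel (fun i j => i = 0 ∨ j = 0 ∨ ((i : ℕ) ≤ 3 ∧ (j : ℕ) ≤ 3))

/-- `C₆^△`: a 6-cycle `0-1-2-3-4-5-0` plus a vertex `6` adjacent to the two adjacent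
cycle vertices `0` and `1`. -/
def C6Tri : SimpleGraph (Fin 7) :=
  SimpleGraph.fromRel (fun i j =>
    ((i : ℕ) < 6 ∧ (j : ℕ) = ((i : ℕ) + 1) % 6) ∨ (i = 6 ∧ (j = 0 ∨ j = 1)))

/-- `F₃`: three triangles `{0,1,2}`, `{0,3,4}`, `{0,5,6}` sharing the common vertex `0`. -/
def friendshipF3 : SimpleGraph (Fin 7) :=
  SimpleGraph.fromRel (fun i j =>
    i = 0 ∨ j = 0 ∨ ((j : ℕ) = (i : ℕ) + 1 ∧ (i : ℕ) % 2 = 1))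

/-- The number of edges of `G` with both end vertices in `S`. -/
noncomputable def edgesIn {V : Type*} (G : SimpleGraph V) (S : Set V) : ℕ :=
  {e ∈ G.edgeSet | ∀ v ∈ e, v ∈ S}.ncard

/-- The quantity `η(H)` for the subgraph `H = G[S]` induced on a vertex set `S`:
`η(H) = Σ_{u ∈ S} (d_H(u) − 2)·x_u/x_{u*} − e(H)`. -/
noncomputable def etaVal {V : Type*} [Fintype V] [DecidableEq V] (G : SimpleGraph V)
    [DecidableRel G.Adj] (x : V → ℝ) (ustar : V) (S : Finset V) : ℝ :=
  (∑ u ∈ S, (((S.filter (fun w => G.Adj u w)).card : ℝ) - 2) * x u / x ustar)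
    - edgesIn G (S : Set V)

/-- `H` is isomorphic to `K₅` with two (distinct) edges removed, in either configuration. -/
def IsK5Minus2e {α : Type*} (H : SimpleGraph α) : Prop :=
  ∃ e₁ e₂ : Sym2 (Fin 5), ¬ e₁.IsDiag ∧ ¬ e₂.IsDiag ∧ e₁ ≠ e₂ ∧
    Nonempty (H ≃g (⊤ : SimpleGraph (Fin 5)).deleteEdges {e₁, e₂})

/-! Since `x_u ≤ x_{u*}` and every vertex of `H = G[S]` has degree at least `2`,
`η(H) ≤ Σ_u (d_H(u) - 2) - e(H) = e(H) - 2|H|`, so everything reduces to bounding `e(H)`.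
For `|H| ≤ 5` the bound `e(H) ≤ C(|H|, 2)` suffices, the graphs with more than `2|H| - 3`
edges being `K₄`, `K₅`, `K₅ - e` and `K₅` minus two edges. For `|H| ≥ 6`, a connected
`P₆`-free graph of minimum degree `2` has two vertices outside of which every degree is at
most `2`, whence `e(H) ≤ 2|H| - 3`. If `H` contains a `4`-cycle, every other vertex is joined
to exactly one diagonal pair of it, and the two ends of that diagonal are the two vertices.
Otherwise every edge lies in a triangle, any two triangles meet, and this leaves room for at
most one vertex of degree `3` or more. -/

open SimpleGraph

lemma ContainsSub.trans_embedding {α β γ : Type*} {F : SimpleGraph α} {H : SimpleGraph β}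
    {H' : SimpleGraph γ} (h : ContainsSub F H) (e : H ↪g H') : ContainsSub F H' := by
  obtain ⟨f, hf, hadj⟩ := h
  exact ⟨e ∘ f, e.injective.comp hf, fun _ _ hab => e.map_rel_iff.2 (hadj hab)⟩

lemma List.exists_infix_of_mem_of_getLast? {α : Type*} {P Q : α → Prop} (hPQ : ∀ x, P x → ¬ Q x) :
    ∀ {l : List α} {a b : α}, a ∈ l → P a → l.getLast? = some b → Q b →
      ∃ a' mid b', P a' ∧ Q b' ∧ (∀ x ∈ mid, ¬ P x ∧ ¬ Q x) ∧ a' :: mid ++ [b'] <:+: l := by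
  classical
  intro l
  induction l with
  | nil => simp
  | cons h t ih =>
    intro a b ha hPa hb hQb
    rcases t with _ | ⟨d, t⟩
    · obtain rfl : a = h := by simpa using ha
      obtain rfl : a = b := by simpa using hb
      exact absurd hQb (hPQ a hPa)
    rw [getLast?_cons_cons] at hb
    by_cases ht : ∃ x ∈ d :: t, P x
    · obtain ⟨x, hx, hPx⟩ := ht
      obtain ⟨a', mid, b', h₁, h₂, h₃, h₄⟩ := ih hx hPx hb hQb
      exact ⟨a', mid, b', h₁, h₂, h₃, h₄.trans (infix_cons (infix_refl _))⟩
    · -- `a` is the last element satisfying `P`: cut the tail at its first element satisfying `Q`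
      obtain rfl : a = h := (mem_cons.1 ha).resolve_right fun hat => ht ⟨a, hat, hPa⟩
      set p : α → Bool := fun x => !decide (Q x)
      obtain ⟨z, r, hzr⟩ : ∃ z r, (d :: t).dropWhile p = z :: r := by
        refine ⟨_, _, (cons_head_tail (l := (d :: t).dropWhile p) fun h => ?_).symm⟩
        simpa [p, hQb] using dropWhile_eq_nil_iff.1 h b (mem_of_getLast? hb)
      have hQz : Q z := by simpa [p, hzr] using head_dropWhile_not p (l := d :: t) (by simp [hzr])
      refine ⟨a, (d :: t).takeWhile p, z, hPa, hQz, fun x hx => ⟨fun hPx => ht ⟨x,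
        (takeWhile_sublist p).subset hx, hPx⟩, by simpa [p] using mem_takeWhile_imp hx⟩,
        IsPrefix.isInfix ⟨r, ?_⟩⟩
      conv_rhs => rw [← takeWhile_append_dropWhile (p := p) (l := d :: t), hzr]
      simp

section General

variable {W : Type*} {H : SimpleGraph W}

lemma containsSub_pathGraph_of_isChain {l : List W} (hc : l.IsChain H.Adj) (hn : l.Nodup)
    {n : ℕ} (hlen : n ≤ l.length) : ContainsSub (pathGraph n) H := by
  refine ⟨fun i => l[i.1], fun i j hij => Fin.ext (hn.getElem_inj_iff.1 hij), ?_⟩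
  intro i j hij
  rcases pathGraph_adj.1 hij with h | h
  · simpa only [← h] using List.isChain_iff_getElem.1 hc i (by omega)
  · simpa only [← h] using (List.isChain_iff_getElem.1 hc j (by omega)).symm

lemma containsSub_pathGraph_six {v₁ v₂ v₃ v₄ v₅ v₆ : W}
    (h₁₂ : H.Adj v₁ v₂) (h₂₃ : H.Adj v₂ v₃) (h₃₄ : H.Adj v₃ v₄) (h₄₅ : H.Adj v₄ v₅)
    (h₅₆ : H.Adj v₅ v₆) (h₁₃ : v₁ ≠ v₃) (h₁₄ : v₁ ≠ v₄) (h₁₅ : v₁ ≠ v₅) (h₁₆ : v₁ ≠ v₆)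
    (h₂₄ : v₂ ≠ v₄) (h₂₅ : v₂ ≠ v₅) (h₂₆ : v₂ ≠ v₆) (h₃₅ : v₃ ≠ v₅) (h₃₆ : v₃ ≠ v₆)
    (h₄₆ : v₄ ≠ v₆) : ContainsSub (pathGraph 6) H := by
  refine containsSub_pathGraph_of_isChain (l := [v₁, v₂, v₃, v₄, v₅, v₆]) ?_ ?_ le_rfl
  · simp [h₁₂, h₂₃, h₃₄, h₄₅, h₅₆]
  · simp [h₁₂.ne, h₂₃.ne, h₃₄.ne, h₄₅.ne, h₅₆.ne, *]

lemma Finset.exists_notMem_of_card_lt [Fintype W] {s : Finset W} (h : #s < Fintype.card W) :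
    ∃ x, x ∉ s := by
  obtain ⟨x, -, hx⟩ := exists_mem_notMem_of_card_lt_card (t := univ) (by simpa using h)
  exact ⟨x, hx⟩

lemma ne_of_notMem_range {α : Type*} {f : α → W} {w : W} (hw : w ∉ Set.range f) (i : α) :
    w ≠ f i :=
  fun h => hw ⟨i, h.symm⟩

lemma exists_notMem_range_ne [Fintype W] {k : ℕ} (hk : k + 2 ≤ Fintype.card W) (c : Fin k → W)
    (w : W) : ∃ w', w' ∉ Set.range c ∧ w' ≠ w := by
  classical
  have hcard : #(insert w (univ.image c)) < Fintype.card W :=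
    calc #(insert w (univ.image c)) ≤ #(univ.image c) + 1 := card_insert_le _ _
      _ ≤ k + 1 := by gcongr; exact card_image_le.trans (by simp)
      _ < Fintype.card W := by omega
  obtain ⟨w', hw'⟩ := Finset.exists_notMem_of_card_lt hcard
  rw [mem_insert, not_or, mem_image, not_exists] at hw'
  exact ⟨w', fun ⟨i, hi⟩ => hw'.2 i ⟨mem_univ i, hi⟩, hw'.1⟩

lemma SimpleGraph.Connected.exists_adj_of_mem_of_notMem (hH : H.Connected) {A : Set W} {a b : W}
    (ha : a ∈ A) (hb : b ∉ A) : ∃ u ∈ A, ∃ v ∉ A, H.Adj u v := by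
  obtain ⟨d, -, hd⟩ := (hH.preconnected a b).some.exists_boundary_dart A ha hb
  exact ⟨_, hd.1, _, hd.2, d.adj⟩

lemma SimpleGraph.IsNClique.exists_adj_adj_of_mem [DecidableEq W] {s : Finset W}
    (hs : H.IsNClique 3 s) {a : W} (ha : a ∈ s) :
    ∃ x y, H.Adj x y ∧ H.Adj y a ∧ x ∈ s ∧ y ∈ s ∧ x ≠ a ∧ y ≠ a := by
  obtain ⟨x, y, hxy, he⟩ := card_eq_two.1 (by rw [card_erase_of_mem ha, hs.card_eq])
  have hx : x ∈ s.erase a := by simp [he]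
  have hy : y ∈ s.erase a := by simp [he]
  rw [mem_erase] at hx hy
  exact ⟨x, y, hs.isClique hx.2 hy.2 hxy, hs.isClique hy.2 ha hy.1, hx.2, hy.2, hx.1, hy.1⟩

section Degree

variable [Fintype W] [DecidableRel H.Adj]

lemma exists_adj_ne_of_two_le_degree {u : W} (h : 2 ≤ H.degree u) (e : W) :
    ∃ z, H.Adj u z ∧ z ≠ e := by
  obtain ⟨z, hz, hze⟩ := Finset.exists_mem_ne (s := H.neighborFinset u)
    (by rw [card_neighborFinset_eq_degree]; omega) e
  exact ⟨z, (mem_neighborFinset _ _ _).1 hz, hze⟩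

lemma exists_adj_ne_ne_of_three_le_degree {u : W} (h : 3 ≤ H.degree u) (e₁ e₂ : W) :
    ∃ z, H.Adj u z ∧ z ≠ e₁ ∧ z ≠ e₂ := by
  classical
  obtain ⟨z, hz⟩ : (H.neighborFinset u \ {e₁, e₂}).Nonempty := by
    rw [← card_pos]
    have h₁ := le_card_sdiff {e₁, e₂} (H.neighborFinset u)
    have h₂ := card_le_two (a := e₁) (b := e₂)
    rw [card_neighborFinset_eq_degree] at h₁
    omega
  simp only [mem_sdiff, mem_neighborFinset, mem_insert, mem_singleton, not_or] at hz
  exact ⟨z, hz.1, hz.2⟩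

lemma degree_le_two_of_adj {v a b : W} (h : ∀ z, H.Adj v z → z = a ∨ z = b) :
    H.degree v ≤ 2 := by
  classical
  rw [← card_neighborFinset_eq_degree]
  exact (card_le_card fun z hz => by simpa using h z ((mem_neighborFinset _ _ _).1 hz)).trans
    card_le_two

end Degree

end General

section PathFree

variable {W : Type*} {H : SimpleGraph W}

/-- An edge leaving the `5`-cycle, followed by the cycle, is a `P₆`. -/

lemma SimpleGraph.Connected.false_of_five_cycle [Fintype W] (hH : H.Connected)
    (hP6 : ¬ ContainsSub (pathGraph 6) H) (h6 : 6 ≤ Fintype.card W) {c₁ c₂ c₃ c₄ c₅ : W}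
    (h₁₂ : H.Adj c₁ c₂) (h₂₃ : H.Adj c₂ c₃) (h₃₄ : H.Adj c₃ c₄) (h₄₅ : H.Adj c₄ c₅)
    (h₅₁ : H.Adj c₅ c₁) (h₁₃ : c₁ ≠ c₃) (h₁₄ : c₁ ≠ c₄) (h₂₄ : c₂ ≠ c₄) (h₂₅ : c₂ ≠ c₅)
    (h₃₅ : c₃ ≠ c₅) : False := by
  classical
  obtain ⟨w, hw⟩ := Finset.exists_notMem_of_card_lt
    ((card_le_five (a := c₁) (b := c₂) (c := c₃) (d := c₄) (e := c₅)).trans_lt h6)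
  obtain ⟨u, hu, v, hv, huv⟩ := hH.exists_adj_of_mem_of_notMem
    (A := ↑({c₁, c₂, c₃, c₄, c₅} : Finset W)) (a := c₁) (by simp) hw
  simp only [coe_insert, coe_singleton, Set.mem_insert_iff, Set.mem_singleton_iff,
    not_or] at hu hv
  obtain ⟨hv₁, hv₂, hv₃, hv₄, hv₅⟩ := hv
  rcases hu with rfl | rfl | rfl | rfl | rfl
  · exact hP6 <| containsSub_pathGraph_six huv.symm h₁₂ h₂₃ h₃₄ h₄₅
      hv₂ hv₃ hv₄ hv₅ h₁₃ h₁₄ h₅₁.ne' h₂₄ h₂₅ h₃₅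
  · exact hP6 <| containsSub_pathGraph_six huv.symm h₂₃ h₃₄ h₄₅ h₅₁
      hv₃ hv₄ hv₅ hv₁ h₂₄ h₂₅ h₁₂.ne' h₃₅ h₁₃.symm h₁₄.symm
  · exact hP6 <| containsSub_pathGraph_six huv.symm h₃₄ h₄₅ h₅₁ h₁₂
      hv₄ hv₅ hv₁ hv₂ h₃₅ h₁₃.symm h₂₃.ne' h₁₄.symm h₂₄.symm h₂₅.symm
  · exact hP6 <| containsSub_pathGraph_six huv.symm h₄₅ h₅₁ h₁₂ h₂₃
      hv₅ hv₁ hv₂ hv₃ h₁₄.symm h₂₄.symm h₃₄.ne' h₂₅.symm h₃₅.symm h₁₃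
  · exact hP6 <| containsSub_pathGraph_six huv.symm h₅₁ h₁₂ h₂₃ h₃₄
      hv₁ hv₂ hv₃ hv₄ h₂₅.symm h₃₅.symm h₄₅.ne' h₁₃ h₁₄ h₂₄

/-- A shortest connection between two disjoint triangles, extended by two edges inside each
of them, is a path on at least six vertices. -/
lemma SimpleGraph.Connected.false_of_disjoint_triangles [DecidableEq W] (hH : H.Connected)
    (hP6 : ¬ ContainsSub (pathGraph 6) H) {s t : Finset W} (hs : H.IsNClique 3 s)
    (ht : H.IsNClique 3 t) (hst : Disjoint s t) : False := by
  obtain ⟨a, ha⟩ : s.Nonempty := by rw [← card_pos, hs.card_eq]; norm_num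
  obtain ⟨b, hb⟩ : t.Nonempty := by rw [← card_pos, ht.card_eq]; norm_num
  let p := (hH.preconnected a b).some.toPath
  obtain ⟨a', mid, b', ha', hb', hmid, hinf⟩ :=
    List.exists_infix_of_mem_of_getLast? (P := (· ∈ s)) (Q := (· ∈ t))
      (fun _ hs' ht' => Finset.disjoint_left.1 hst hs' ht') p.1.start_mem_support ha
      (by rw [List.getLast?_eq_some_getLast p.1.support_ne_nil, p.1.getLast_support]) hb
  obtain ⟨x, y, hxy, hya, hx, hy, hxa, hya'⟩ := hs.exists_adj_adj_of_mem ha'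
  obtain ⟨v, u, hvu, hub, hv, hu, hvb, hub'⟩ := ht.exists_adj_adj_of_mem hb'
  have hxt : x ∉ t := Finset.disjoint_left.1 hst hx
  have hyt : y ∉ t := Finset.disjoint_left.1 hst hy
  have hat : a' ∉ t := Finset.disjoint_left.1 hst ha'
  have hbs : b' ∉ s := Finset.disjoint_right.1 hst hb'
  have hseg_chain : (a' :: mid ++ [b']).IsChain H.Adj := p.1.isChain_adj_support.infix hinf
  have hseg_nodup : (a' :: mid ++ [b']).Nodup := p.2.support_nodup.sublist hinf.sublist
  refine hP6 (containsSub_pathGraph_of_isChain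
    (l := x :: y :: (a' :: mid ++ [b'] ++ [u, v])) ?_ ?_ (by simp))
  · rw [List.isChain_cons, List.isChain_cons, List.isChain_append]
    refine ⟨by simpa using hxy, by simpa using hya, hseg_chain, by simpa using hvu.symm, ?_⟩
    rintro z hz _ ⟨⟩
    obtain rfl : z = b' := Option.some_inj.1 (hz.symm.trans List.getLast?_concat)
    exact hub.symm
  · simp only [List.cons_append, List.nodup_cons, List.nodup_append] at hseg_nodup ⊢
    refine ⟨?_, ?_, ?_, hseg_nodup.2, ?_, ?_⟩
    all_goals simp only [List.mem_cons, List.mem_append, List.not_mem_nil, or_false, not_or]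
    · exact ⟨hxy.ne, hxa, ⟨fun h => (hmid x h).1 hx, fun h => hxt (h ▸ hb')⟩,
        fun h => hxt (h ▸ hu), fun h => hxt (h ▸ hv)⟩
    · exact ⟨hya', ⟨fun h => (hmid y h).1 hy, fun h => hyt (h ▸ hb')⟩,
        fun h => hyt (h ▸ hu), fun h => hyt (h ▸ hv)⟩
    · exact ⟨by simpa using hseg_nodup.1, fun h => hat (h ▸ hu), fun h => hat (h ▸ hv)⟩
    · exact ⟨hvu.ne', by simp, List.nodup_nil⟩
    · rintro z (hz | rfl) w (rfl | rfl)
      exacts [fun h => (hmid z hz).2 (h ▸ hu), fun h => (hmid z hz).2 (h ▸ hv), hub'.symm, hvb.symm]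

def IsFourCycle (H : SimpleGraph W) (c : Fin 4 → W) : Prop :=
  Function.Injective c ∧ ∀ i, H.Adj (c i) (c (i + 1))

namespace IsFourCycle

variable {c : Fin 4 → W}

lemma adj (hc : IsFourCycle H c) (i : Fin 4) : H.Adj (c i) (c (i + 1)) := hc.2 i

lemma ne (hc : IsFourCycle H c) {i j : Fin 4} (h : i ≠ j) : c i ≠ c j := hc.1.ne h

lemma rotate (hc : IsFourCycle H c) (k : Fin 4) : IsFourCycle H (fun i => c (i + k)) :=
  ⟨hc.1.comp (add_left_injective k), fun i => by simpa only [add_right_comm] using hc.adj (i + k)⟩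

lemma range_rotate (k : Fin 4) : Set.range (fun i => c (i + k)) = Set.range c :=
  (add_right_surjective k).range_comp c

lemma of_adj {a b c d : W} (hac : a ≠ c) (hbd : b ≠ d) (hab : H.Adj a b) (hbc : H.Adj b c)
    (hcd : H.Adj c d) (hda : H.Adj d a) : IsFourCycle H ![a, b, c, d] := by
  refine ⟨fun i j hij => ?_, fun i => ?_⟩
  · fin_cases i <;> fin_cases j <;> simp_all [hab.ne, hbc.ne, hcd.ne, hda.ne, hab.ne', hbc.ne',
      hcd.ne', hda.ne', hac.symm, hbd.symm]
  · fin_cases i <;> assumption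

lemma false_of_pendant_path (hP6 : ¬ ContainsSub (pathGraph 6) H) (hc : IsFourCycle H c)
    {u v : W} (hu : u ∉ Set.range c) (hv : v ∉ Set.range c) (hvu : H.Adj v u) {i : Fin 4}
    (hui : H.Adj u (c i)) : False := by
  fin_cases i <;>
  exact hP6 <| containsSub_pathGraph_six hvu hui (hc.adj _) (hc.adj _) (hc.adj _)
    (ne_of_notMem_range hv _) (ne_of_notMem_range hv _) (ne_of_notMem_range hv _)
    (ne_of_notMem_range hv _) (ne_of_notMem_range hu _) (ne_of_notMem_range hu _)
    (ne_of_notMem_range hu _) (hc.ne (by decide)) (hc.ne (by decide)) (hc.ne (by decide))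

lemma exists_adj_of_notMem_range (hH : H.Connected) (hP6 : ¬ ContainsSub (pathGraph 6) H)
    (hc : IsFourCycle H c) {w : W} (hw : w ∉ Set.range c) : ∃ i, H.Adj w (c i) := by
  by_contra hwc
  obtain ⟨u, hu, v, hv, huv⟩ := hH.exists_adj_of_mem_of_notMem
    (A := Set.range c ∪ {u | ∃ i, H.Adj u (c i)}) (b := w) (Or.inl ⟨0, rfl⟩) (by simp [hw, hwc])
  simp only [Set.mem_union, Set.mem_ofPred_eq, not_or] at hu hv
  by_cases huc : u ∈ Set.range c
  · obtain ⟨i, rfl⟩ := huc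
    exact hv.2 ⟨i, huv.symm⟩
  · obtain ⟨i, hi⟩ := hu.resolve_left huc
    exact hc.false_of_pendant_path hP6 huc hv.1 huv.symm hi

lemma not_adj_of_notMem_range (hH : H.Connected) (hP6 : ¬ ContainsSub (pathGraph 6) H)
    (hc : IsFourCycle H c) {u v : W} (hu : u ∉ Set.range c) (hv : v ∉ Set.range c) :
    ¬ H.Adj u v := fun huv =>
  have ⟨_, hi⟩ := hc.exists_adj_of_notMem_range hH hP6 hu
  hc.false_of_pendant_path hP6 hu hv huv.symm hi

lemma not_adj_succ_of_adj [Fintype W] (hH : H.Connected) (hP6 : ¬ ContainsSub (pathGraph 6) H)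
    (h6 : 6 ≤ Fintype.card W) (hc : IsFourCycle H c) {w : W} (hw : w ∉ Set.range c) {i : Fin 4}
    (hi : H.Adj w (c i)) : ¬ H.Adj w (c (i + 1)) := fun hi' => by
  fin_cases i <;>
  exact hH.false_of_five_cycle hP6 h6 hi' (hc.adj _) (hc.adj _) (hc.adj _) hi.symm
    (ne_of_notMem_range hw _) (ne_of_notMem_range hw _) (hc.ne (by decide)) (hc.ne (by decide))
    (hc.ne (by decide))

variable [Fintype W] [DecidableRel H.Adj]

lemma adj_add_two_of_adj (hH : H.Connected) (hP6 : ¬ ContainsSub (pathGraph 6) H)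
    (h6 : 6 ≤ Fintype.card W) (hc : IsFourCycle H c) {w : W} (hw : w ∉ Set.range c)
    (hδ : 2 ≤ H.degree w) {i : Fin 4} (hi : H.Adj w (c i)) : H.Adj w (c (i + 2)) := by
  obtain ⟨z, hwz, hz⟩ := exists_adj_ne_of_two_le_degree hδ (c i)
  obtain ⟨j, rfl⟩ : z ∈ Set.range c :=
    by_contra fun hz' => hc.not_adj_of_notMem_range hH hP6 hw hz' hwz
  rcases (by decide : ∀ i j : Fin 4, j = i ∨ j = i + 1 ∨ j = i + 2 ∨ j = i + 3) i j
    with rfl | rfl | rfl | rfl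
  · exact absurd rfl hz
  · exact absurd hwz (hc.not_adj_succ_of_adj hH hP6 h6 hw hi)
  · exact hwz
  · refine absurd ?_ (hc.not_adj_succ_of_adj hH hP6 h6 hw hwz)
    rwa [(by decide : ∀ i : Fin 4, i + 3 + 1 = i)]

/-- A vertex `w` off the cycle joined to `c 1` and `c 3` would make `w₁ (c 0) (c 1) w (c 3) (c 2)`
a `P₆`. -/
lemma adj_two_of_adj_zero (hH : H.Connected) (hP6 : ¬ ContainsSub (pathGraph 6) H)
    (h6 : 6 ≤ Fintype.card W) (hδ : ∀ v, 2 ≤ H.degree v) (hc : IsFourCycle H c) {w₁ : W}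
    (hw₁ : w₁ ∉ Set.range c) (h₁ : H.Adj w₁ (c 0)) {w : W} (hw : w ∉ Set.range c) :
    H.Adj w (c 2) ∧ ¬ H.Adj w (c 1) ∧ ¬ H.Adj w (c 3) := by
  have hodd : ¬ (H.Adj w (c 1) ∧ H.Adj w (c 3)) := by
    rintro ⟨hw1, hw3⟩
    have h₁₁ : ¬ H.Adj w₁ (c 1) := hc.not_adj_succ_of_adj hH hP6 h6 hw₁ h₁
    exact hP6 <| containsSub_pathGraph_six h₁ (hc.adj 0) hw1.symm hw3 (hc.adj 2).symm
      (ne_of_notMem_range hw₁ 1) (fun h => h₁₁ (h ▸ hw1)) (ne_of_notMem_range hw₁ 3)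
      (ne_of_notMem_range hw₁ 2) (ne_of_notMem_range hw 0).symm (hc.ne (by decide))
      (hc.ne (by decide)) (hc.ne (by decide)) (hc.ne (by decide)) (ne_of_notMem_range hw 2)
  obtain ⟨j, hj⟩ := hc.exists_adj_of_notMem_range hH hP6 hw
  have hj₂ := hc.adj_add_two_of_adj hH hP6 h6 hw (hδ w) hj
  rcases (by decide : ∀ j : Fin 4, j = 0 ∨ j = 1 ∨ j = 2 ∨ j = 3) j with rfl | rfl | rfl | rfl
  · exact ⟨hj₂, hc.not_adj_succ_of_adj hH hP6 h6 hw hj, hc.not_adj_succ_of_adj hH hP6 h6 hw hj₂⟩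
  · exact absurd ⟨hj, hj₂⟩ hodd
  · exact ⟨hj, hc.not_adj_succ_of_adj hH hP6 h6 hw hj₂, hc.not_adj_succ_of_adj hH hP6 h6 hw hj⟩
  · exact absurd ⟨hj₂, hj⟩ hodd

lemma not_adj_one_three_of_adj_zero (hH : H.Connected) (hP6 : ¬ ContainsSub (pathGraph 6) H)
    (h6 : 6 ≤ Fintype.card W) (hδ : ∀ v, 2 ≤ H.degree v) (hc : IsFourCycle H c) {w₁ : W}
    (hw₁ : w₁ ∉ Set.range c) (h₁ : H.Adj w₁ (c 0)) : ¬ H.Adj (c 1) (c 3) := by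
  obtain ⟨w₂, hw₂c, hw₂⟩ := exists_notMem_range_ne h6 c w₁
  exact fun h13 => hP6 <| containsSub_pathGraph_six h₁ (hc.adj 0) h13 (hc.adj 2).symm
    (hc.adj_two_of_adj_zero hH hP6 h6 hδ hw₁ h₁ hw₂c).1.symm
    (ne_of_notMem_range hw₁ 1) (ne_of_notMem_range hw₁ 3) (ne_of_notMem_range hw₁ 2)
    hw₂.symm (hc.ne (by decide)) (hc.ne (by decide)) (ne_of_notMem_range hw₂c 0).symm
    (hc.ne (by decide)) (ne_of_notMem_range hw₂c 1).symm (ne_of_notMem_range hw₂c 3).symm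

lemma isIndepSet_compl_of_adj_zero (hH : H.Connected) (hP6 : ¬ ContainsSub (pathGraph 6) H)
    (h6 : 6 ≤ Fintype.card W) (hδ : ∀ v, 2 ≤ H.degree v) (hc : IsFourCycle H c) {w₁ : W}
    (hw₁ : w₁ ∉ Set.range c) (h₁ : H.Adj w₁ (c 0)) : H.IsIndepSet {c 0, c 2}ᶜ := by
  have hoff := fun {w} => hc.adj_two_of_adj_zero hH hP6 h6 hδ hw₁ h₁ (w := w)
  have hchord := hc.not_adj_one_three_of_adj_zero hH hP6 h6 hδ hw₁ h₁
  have hcases : ∀ x, x ≠ c 0 → x ≠ c 2 → x ∉ Set.range c ∨ x = c 1 ∨ x = c 3 := by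
    rintro x hx₀ hx₂
    by_cases hx : x ∈ Set.range c
    · obtain ⟨j, rfl⟩ := hx
      fin_cases j <;> simp_all
    · exact Or.inl hx
  intro u hu v hv _
  simp only [Set.mem_compl_iff, Set.mem_insert_iff, Set.mem_singleton_iff, not_or] at hu hv
  rcases hcases u hu.1 hu.2 with hu | rfl | rfl <;> rcases hcases v hv.1 hv.2 with hv | rfl | rfl
  · exact hc.not_adj_of_notMem_range hH hP6 hu hv
  · exact (hoff hu).2.1
  · exact (hoff hu).2.2
  · exact fun h => (hoff hv).2.1 h.symm
  · exact H.irrefl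
  · exact hchord
  · exact fun h => (hoff hv).2.2 h.symm
  · exact fun h => hchord h.symm
  · exact H.irrefl

lemma exists_forall_degree_le_two (hH : H.Connected) (hP6 : ¬ ContainsSub (pathGraph 6) H)
    (h6 : 6 ≤ Fintype.card W) (hδ : ∀ v, 2 ≤ H.degree v) (hc : IsFourCycle H c) :
    ∃ a b, a ≠ b ∧ ∀ v, v ≠ a → v ≠ b → H.degree v ≤ 2 := by
  obtain ⟨w, hwc, -⟩ := exists_notMem_range_ne h6 c (c 0)
  obtain ⟨i, hi⟩ := hc.exists_adj_of_notMem_range hH hP6 hwc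
  have hc' := hc.rotate i
  rw [← range_rotate i] at hwc
  refine ⟨c (0 + i), c (2 + i), hc'.ne (by decide), fun v hv₀ hv₂ =>
    degree_le_two_of_adj (a := c (0 + i)) (b := c (2 + i)) fun z hvz => ?_⟩
  by_contra hz
  exact hc'.isIndepSet_compl_of_adj_zero hH hP6 h6 hδ hwc (by simpa using hi)
    (by rintro (h | h) <;> contradiction) hz hvz.ne hvz

end IsFourCycle

end PathFree

section NoFourCycle

variable {W : Type*} {H : SimpleGraph W}

lemma eq_of_adj_of_adj_of_forall_not_isFourCycle (hC4 : ∀ c, ¬ IsFourCycle H c) {u v w w' : W}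
    (huv : u ≠ v) (huw : H.Adj u w) (hvw : H.Adj v w) (huw' : H.Adj u w') (hvw' : H.Adj v w') :
    w = w' :=
  by_contra fun hw => hC4 _ (.of_adj huv hw huw hvw.symm hvw' huw'.symm)

variable [Fintype W] [DecidableRel H.Adj]

lemma exists_adj_adj_of_adj (hH : H.Connected) (hP6 : ¬ ContainsSub (pathGraph 6) H)
    (h6 : 6 ≤ Fintype.card W) (hδ : ∀ v, 2 ≤ H.degree v) (hC4 : ∀ c, ¬ IsFourCycle H c)
    {u v : W} (huv : H.Adj u v) : ∃ w, H.Adj u w ∧ H.Adj v w := by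
  -- otherwise two further steps on each side of `uv` form a `P₆`, as there are no short cycles
  by_contra! hcon
  obtain ⟨u₁, huu₁, hu₁v⟩ := exists_adj_ne_of_two_le_degree (hδ u) v
  obtain ⟨v₁, hvv₁, hv₁u⟩ := exists_adj_ne_of_two_le_degree (hδ v) u
  obtain ⟨u₂, hu₁u₂, hu₂u⟩ := exists_adj_ne_of_two_le_degree (hδ u₁) u
  obtain ⟨v₂, hv₁v₂, hv₂v⟩ := exists_adj_ne_of_two_le_degree (hδ v₁) v
  have hvu₁ : ¬ H.Adj v u₁ := hcon u₁ huu₁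
  have huv₁ : ¬ H.Adj u v₁ := fun h => hcon v₁ h hvv₁
  have hu₁v₁ : u₁ ≠ v₁ := fun h => hvu₁ (h ▸ hvv₁)
  have hu₂v : u₂ ≠ v := fun h => hvu₁ (h ▸ hu₁u₂.symm)
  have hv₂u : v₂ ≠ u := fun h => huv₁ (h ▸ hv₁v₂.symm)
  have hu₂v₁ : u₂ ≠ v₁ := fun h =>
    hC4 _ (.of_adj hv₁u.symm hu₁v.symm huv hvv₁ (h ▸ hu₁u₂.symm) huu₁.symm)
  have hv₂u₁ : v₂ ≠ u₁ := fun h =>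
    hC4 _ (.of_adj hv₁u.symm hu₁v.symm huv hvv₁ (h ▸ hv₁v₂) huu₁.symm)
  have hu₂v₂ : u₂ ≠ v₂ := fun h =>
    hH.false_of_five_cycle hP6 h6 huu₁ hu₁u₂ (h ▸ hv₁v₂.symm) hvv₁.symm huv.symm
      hu₂u.symm hv₁u.symm hu₁v₁ hu₁v hu₂v
  exact hP6 <| containsSub_pathGraph_six hu₁u₂.symm huu₁.symm huv hvv₁ hv₁v₂ hu₂u hu₂v hu₂v₁
    hu₂v₂ hu₁v hu₁v₁ hv₂u₁.symm hv₁u.symm hv₂u.symm hv₂v.symm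

lemma eq_or_eq_of_adj_of_triangle (hH : H.Connected) (hP6 : ¬ ContainsSub (pathGraph 6) H)
    (h6 : 6 ≤ Fintype.card W) (hδ : ∀ v, 2 ≤ H.degree v) (hC4 : ∀ c, ¬ IsFourCycle H c)
    {u a b c z : W} (hua : H.Adj u a) (hub : H.Adj u b) (hab : H.Adj a b) (huc : H.Adj u c)
    (hca : c ≠ a) (hcb : c ≠ b) (hza : H.Adj z a) : z = u ∨ z = b := by
  by_contra! hz
  have hac : ¬ H.Adj a c := fun h => hC4 _ (.of_adj hcb hua.ne huc.symm hub hab.symm h)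
  have hbc : ¬ H.Adj b c := fun h => hC4 _ (.of_adj hca.symm hub.ne' hab h huc.symm hua)
  have hzu : ¬ H.Adj z u := fun h => hC4 _ (.of_adj hz.2 hua.ne h hub hab.symm hza.symm)
  obtain ⟨d, hud, hcd⟩ := exists_adj_adj_of_adj hH hP6 h6 hδ hC4 huc
  exact hP6 <| containsSub_pathGraph_six hza hab hub.symm huc hcd hz.2 hz.1
    (fun h => hac (h ▸ hza).symm) (fun h => hzu (h ▸ hud.symm)) hua.ne' hca.symm
    (fun h => hac (h ▸ hcd.symm)) hcb.symm (fun h => hbc (h ▸ hcd.symm)) hud.ne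

lemma exists_triangle_of_three_le_degree (hH : H.Connected)
    (hP6 : ¬ ContainsSub (pathGraph 6) H) (h6 : 6 ≤ Fintype.card W) (hδ : ∀ v, 2 ≤ H.degree v)
    (hC4 : ∀ c, ¬ IsFourCycle H c) {u : W} (hu : 3 ≤ H.degree u) {v : W} (hvu : v ≠ u) :
    ∃ x x', H.Adj u x ∧ H.Adj u x' ∧ H.Adj x x' ∧ x ≠ v ∧ x' ≠ v ∧
      (∀ z, H.Adj z x → z = u ∨ z = x') ∧ (∀ z, H.Adj z x' → z = u ∨ z = x) := by
  obtain ⟨x, hux, hxv, hxv'⟩ : ∃ x, H.Adj u x ∧ x ≠ v ∧ ¬ H.Adj x v := by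
    by_cases hw : ∃ w, H.Adj u w ∧ H.Adj v w
    · obtain ⟨w, huw, hvw⟩ := hw
      obtain ⟨x, hux, hxv, hxw⟩ := exists_adj_ne_ne_of_three_le_degree hu v w
      exact ⟨x, hux, hxv, fun h => hxw
        (eq_of_adj_of_adj_of_forall_not_isFourCycle hC4 hvu.symm hux h.symm huw hvw)⟩
    · obtain ⟨x, hux, hxv, -⟩ := exists_adj_ne_ne_of_three_le_degree hu v v
      exact ⟨x, hux, hxv, fun h => hw ⟨x, hux, h.symm⟩⟩
  obtain ⟨x', hux', hxx'⟩ := exists_adj_adj_of_adj hH hP6 h6 hδ hC4 hux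
  obtain ⟨c, huc, hcx, hcx'⟩ := exists_adj_ne_ne_of_three_le_degree hu x x'
  exact ⟨x, x', hux, hux', hxx', hxv, fun h => hxv' (h ▸ hxx'),
    fun z => eq_or_eq_of_adj_of_triangle hH hP6 h6 hδ hC4 hux hux' hxx' huc hcx hcx',
    fun z => eq_or_eq_of_adj_of_triangle hH hP6 h6 hδ hC4 hux' hux hxx'.symm huc hcx' hcx⟩

lemma eq_of_three_le_degree (hH : H.Connected) (hP6 : ¬ ContainsSub (pathGraph 6) H)
    (h6 : 6 ≤ Fintype.card W) (hδ : ∀ v, 2 ≤ H.degree v) (hC4 : ∀ c, ¬ IsFourCycle H c)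
    {u v : W} (hu : 3 ≤ H.degree u) (hv : 3 ≤ H.degree v) : u = v := by
  classical
  by_contra huv
  obtain ⟨x, x', hux, hux', hxx', hxv, hx'v, hx, hx'⟩ :=
    exists_triangle_of_three_le_degree hH hP6 h6 hδ hC4 hu (Ne.symm huv)
  obtain ⟨y, y', hvy, hvy', hyy', hyu, hy'u, -, -⟩ :=
    exists_triangle_of_three_le_degree hH hP6 h6 hδ hC4 hv huv
  have hvx : ¬ H.Adj v x := fun h => (hx v h).elim (fun h => huv h.symm) (fun h => hx'v h.symm)
  have hvx' : ¬ H.Adj v x' := fun h => (hx' v h).elim (fun h => huv h.symm) (fun h => hxv h.symm)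
  refine hH.false_of_disjoint_triangles hP6 (s := {u, x, x'}) (t := {v, y, y'})
    (is3Clique_triple_iff.2 ⟨hux, hux', hxx'⟩) (is3Clique_triple_iff.2 ⟨hvy, hvy', hyy'⟩) ?_
  simp only [Finset.disjoint_insert_left, Finset.disjoint_singleton_left, mem_insert,
    mem_singleton, not_or]
  exact ⟨⟨huv, hyu.symm, hy'u.symm⟩, ⟨hxv, fun h => hvx (h ▸ hvy), fun h => hvx (h ▸ hvy')⟩,
    hx'v, fun h => hvx' (h ▸ hvy), fun h => hvx' (h ▸ hvy')⟩

lemma exists_forall_degree_le_two_of_forall_not_isFourCycle (hH : H.Connected)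
    (hP6 : ¬ ContainsSub (pathGraph 6) H) (h6 : 6 ≤ Fintype.card W) (hδ : ∀ v, 2 ≤ H.degree v)
    (hC4 : ∀ c, ¬ IsFourCycle H c) :
    ∃ a b, a ≠ b ∧ ∀ v, v ≠ a → v ≠ b → H.degree v ≤ 2 := by
  obtain ⟨a, ha⟩ : ∃ a, ∀ v, v ≠ a → H.degree v ≤ 2 := by
    by_cases h : ∃ a, 3 ≤ H.degree a
    · obtain ⟨a, ha⟩ := h
      exact ⟨a, fun v hva => not_lt.1 fun hv => hva (eq_of_three_le_degree hH hP6 h6 hδ hC4 hv ha)⟩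
    · obtain ⟨a⟩ := hH.nonempty
      exact ⟨a, fun v _ => not_lt.1 fun hv => h ⟨v, hv⟩⟩
  obtain ⟨b, -, hba⟩ := exists_adj_ne_of_two_le_degree (hδ a) a
  exact ⟨a, b, hba.symm, fun v hva _ => ha v hva⟩

end NoFourCycle

section EdgeBound

variable {W : Type*} {H : SimpleGraph W} [Fintype W] [DecidableRel H.Adj]

lemma sum_degree_add_six_le_of_degree_le_two {a b : W} (hab : a ≠ b)
    (h : ∀ v, v ≠ a → v ≠ b → H.degree v ≤ 2) : ∑ v, H.degree v + 6 ≤ 4 * Fintype.card W := by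
  classical
  have hb : b ∈ univ.erase a := mem_erase.2 ⟨hab.symm, mem_univ b⟩
  rw [← add_sum_erase _ _ (mem_univ a), ← add_sum_erase _ _ hb]
  have hrest : ∑ v ∈ (univ.erase a).erase b, H.degree v ≤ #((univ.erase a).erase b) * 2 :=
    sum_le_card_nsmul _ _ 2 fun v hv => by
      rw [mem_erase, mem_erase] at hv
      exact h v hv.2.1 hv.1
  have := card_erase_add_one hb
  have := card_erase_add_one (mem_univ a)
  have := H.degree_lt_card_verts a
  have := H.degree_lt_card_verts b
  rw [card_univ] at *
  omega

lemma SimpleGraph.Connected.card_edgeFinset_add_three_le (hH : H.Connected)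
    (hP6 : ¬ ContainsSub (pathGraph 6) H) (h6 : 6 ≤ Fintype.card W) (hδ : ∀ v, 2 ≤ H.degree v) :
    #H.edgeFinset + 3 ≤ 2 * Fintype.card W := by
  obtain ⟨a, b, hab, h⟩ : ∃ a b, a ≠ b ∧ ∀ v, v ≠ a → v ≠ b → H.degree v ≤ 2 := by
    by_cases hC4 : ∃ c, IsFourCycle H c
    · obtain ⟨c, hc⟩ := hC4
      exact hc.exists_forall_degree_le_two hH hP6 h6 hδ
    · exact exists_forall_degree_le_two_of_forall_not_isFourCycle hH hP6 h6 hδ (not_exists.1 hC4)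
  have := sum_degree_add_six_le_of_degree_le_two hab h
  rw [sum_degrees_eq_twice_card_edges] at this
  omega

lemma SimpleGraph.Connected.card_edgeFinset_add_three_le_or (hH : H.Connected)
    (hP6 : ¬ ContainsSub (pathGraph 6) H) (hδ : ∀ v, 2 ≤ H.degree v) :
    #H.edgeFinset + 3 ≤ 2 * Fintype.card W ∨ (Fintype.card W = 4 ∧ #H.edgeFinset = 6) ∨
      (Fintype.card W = 5 ∧ 8 ≤ #H.edgeFinset ∧ #H.edgeFinset ≤ 10) := by
  obtain ⟨v⟩ := hH.nonempty
  have h3 : 3 ≤ Fintype.card W := (hδ v).trans_lt (H.degree_lt_card_verts v)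
  have hle := H.card_edgeFinset_le_card_choose_two
  by_cases h6 : 6 ≤ Fintype.card W
  · exact Or.inl (hH.card_edgeFinset_add_three_le hP6 h6 hδ)
  rcases (by omega : Fintype.card W = 3 ∨ Fintype.card W = 4 ∨ Fintype.card W = 5)
    with hn | hn | hn <;> rw [hn] at hle ⊢ <;> simp [Nat.choose] at hle <;> omega

end EdgeBound

section SmallGraphs

variable {W : Type*} {H : SimpleGraph W}

lemma nonempty_iso_top_deleteEdges_image {W' : Type*} (f : W ≃ W') :
    Nonempty (H ≃g (⊤ : SimpleGraph W').deleteEdges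
      (Sym2.map f '' ((⊤ : SimpleGraph W).edgeSet \ H.edgeSet))) := by
  refine ⟨⟨f, fun {a b} => ?_⟩⟩
  rw [deleteEdges_adj, top_adj, ← Sym2.map_mk,
    (Sym2.map.injective f.injective).mem_set_image, f.injective.ne_iff]
  simp only [Set.mem_sdiff, edgeSet_top, Set.mem_compl_iff, Sym2.mem_diagSet,
    Sym2.mk_isDiag_iff, mem_edgeSet, not_and, not_not]
  exact ⟨fun h => h.2 h.1, fun h => ⟨h.ne, fun _ => h⟩⟩

lemma exists_equiv_fin_apply_eq_apply_eq [Fintype W] [DecidableEq W] {n : ℕ}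
    (hn : Fintype.card W = n) {p q : W} (hpq : p ≠ q) {i j : Fin n} (hij : i ≠ j) :
    ∃ f : W ≃ Fin n, f p = i ∧ f q = j := by
  let g := (Fintype.equivFinOfCardEq hn).trans (Equiv.swap (Fintype.equivFinOfCardEq hn p) i)
  have hgp : g p = i := by simp [g]
  have hgq : g q ≠ i := hgp ▸ g.injective.ne hpq.symm
  refine ⟨g.trans (Equiv.swap (g q) j), ?_, by simp⟩
  rw [Equiv.trans_apply, hgp, Equiv.swap_apply_of_ne_of_ne hgq.symm hij]

variable [Fintype W] [DecidableRel H.Adj]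

lemma card_missing_edges [DecidableEq W] :
    #((⊤ : SimpleGraph W).edgeFinset \ H.edgeFinset) =
      (Fintype.card W).choose 2 - #H.edgeFinset := by
  rw [card_sdiff_of_subset (edgeFinset_mono le_top), card_edgeFinset_top_eq_card_choose_two]

lemma nonempty_iso_top_of_card_edgeFinset {n : ℕ} (hn : Fintype.card W = n)
    (he : #H.edgeFinset = n.choose 2) : Nonempty (H ≃g (⊤ : SimpleGraph (Fin n))) := by
  classical
  have hM : (⊤ : SimpleGraph W).edgeFinset \ H.edgeFinset = ∅ := by
    rw [← card_eq_zero, card_missing_edges, he, hn, Nat.sub_self]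
  obtain ⟨e⟩ := nonempty_iso_top_deleteEdges_image (H := H) (Fintype.equivFinOfCardEq hn)
  rw [← coe_edgeFinset, ← coe_edgeFinset, ← coe_sdiff, hM, coe_empty, Set.image_empty,
    deleteEdges_empty] at e
  exact ⟨e⟩

lemma nonempty_iso_top_deleteEdges_of_card_edgeFinset (hn : Fintype.card W = 5)
    (he : #H.edgeFinset = 9) :
    Nonempty (H ≃g (⊤ : SimpleGraph (Fin 5)).deleteEdges {s(3, 4)}) := by
  classical
  obtain ⟨m, hm⟩ := card_eq_one.1 <| (card_missing_edges (H := H)).trans (by rw [he, hn]; rfl)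
  induction m using Sym2.ind with | _ p q => ?_
  have hpq : p ≠ q := by
    have : s(p, q) ∈ (⊤ : SimpleGraph W).edgeFinset \ H.edgeFinset := hm ▸ mem_singleton_self _
    simpa using (mem_sdiff.1 this).1
  obtain ⟨f, hfp, hfq⟩ := exists_equiv_fin_apply_eq_apply_eq hn hpq (by decide : (3 : Fin 5) ≠ 4)
  obtain ⟨e⟩ := nonempty_iso_top_deleteEdges_image (H := H) f
  rw [← coe_edgeFinset, ← coe_edgeFinset, ← coe_sdiff, hm, coe_singleton, Set.image_singleton,
    Sym2.map_mk, hfp, hfq] at e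
  exact ⟨e⟩

lemma isK5Minus2e_of_card_edgeFinset (hn : Fintype.card W = 5) (he : #H.edgeFinset = 8) :
    IsK5Minus2e H := by
  classical
  obtain ⟨m₁, m₂, hm, hM⟩ :=
    card_eq_two.1 <| (card_missing_edges (H := H)).trans (by rw [he, hn]; rfl)
  have hdiag : ∀ m ∈ (⊤ : SimpleGraph W).edgeFinset \ H.edgeFinset, ¬ m.IsDiag := fun m hm =>
    by simpa using (mem_sdiff.1 hm).1
  let f := Fintype.equivFinOfCardEq hn
  obtain ⟨e⟩ := nonempty_iso_top_deleteEdges_image (H := H) f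
  rw [← coe_edgeFinset, ← coe_edgeFinset, ← coe_sdiff, hM, coe_insert, coe_singleton,
    Set.image_insert_eq, Set.image_singleton] at e
  refine ⟨Sym2.map f m₁, Sym2.map f m₂, ?_, ?_, (Sym2.map.injective f.injective).ne hm, ⟨e⟩⟩ <;>
    rw [Sym2.isDiag_map f.injective] <;> exact hdiag _ (hM ▸ by simp)

end SmallGraphs

section InducedSubgraph

variable {V : Type*} (G : SimpleGraph V) [DecidableRel G.Adj] (S : Finset V)

lemma degree_induce_eq_card_filter (v : (S : Set V)) :
    (G.induce (S : Set V)).degree v = #(S.filter (G.Adj v)) := by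
  rw [← card_neighborFinset_eq_degree, ← card_map (Function.Embedding.subtype _)]
  congr 1
  ext w
  simp [and_comm]

lemma edgesIn_eq_card_edgeFinset_induce :
    edgesIn G S = #(G.induce (S : Set V)).edgeFinset := by
  rw [edgesIn, ← Set.ncard_coe_finset, coe_edgeFinset,
    ← Set.ncard_image_of_injective _ (Sym2.map.injective Subtype.val_injective)]
  congr 1
  ext e
  induction e using Sym2.ind with | _ a b => ?_
  simp only [Set.mem_sep_iff, mem_edgeSet, Sym2.mem_iff, forall_eq_or_imp, forall_eq,
    Set.mem_image, Sym2.exists, Sym2.map_mk, Sym2.eq_iff]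
  simp only [SetLike.mem_coe, comap_adj, Function.Embedding.subtype_apply, Subtype.exists,
    exists_and_left, exists_prop]
  constructor
  · rintro ⟨hab, ha, hb⟩
    exact ⟨a, ha, b, hab, hb, Or.inl ⟨rfl, rfl⟩⟩
  · rintro ⟨a', ha', b', hab', hb', ⟨rfl, rfl⟩ | ⟨rfl, rfl⟩⟩
    exacts [⟨hab', ha', hb'⟩, ⟨hab'.symm, hb', ha'⟩]

lemma sum_card_filter_adj_eq_two_mul_edgesIn [DecidableEq V] :
    ∑ u ∈ S, #(S.filter (G.Adj u)) = 2 * edgesIn G S := by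
  rw [edgesIn_eq_card_edgeFinset_induce, ← sum_degrees_eq_twice_card_edges, ← sum_coe_sort S]
  exact sum_congr rfl fun v _ => (degree_induce_eq_card_filter G S v).symm

end InducedSubgraph

lemma etaVal_le_neg_of_edgesIn_add_le {V : Type*} [Fintype V] [DecidableEq V]
    {G : SimpleGraph V} [DecidableRel G.Adj] {x : V → ℝ} {ustar : V} {S : Finset V}
    (hpos : ∀ v, 0 < x v) (hmax : ∀ v, x v ≤ x ustar)
    (hδ : ∀ u ∈ S, 2 ≤ #(S.filter (G.Adj u))) {k : ℕ} (hk : edgesIn G S + k ≤ 2 * #S) :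
    etaVal G x ustar S ≤ -k := by
  have hterm : ∀ u ∈ S, ((#(S.filter (G.Adj u)) : ℝ) - 2) * x u / x ustar ≤
      #(S.filter (G.Adj u)) - 2 := fun u hu => by
    have : (2 : ℝ) ≤ #(S.filter (G.Adj u)) := by exact_mod_cast hδ u hu
    rw [mul_div_assoc]
    exact mul_le_of_le_one_right (by linarith) (div_le_one_of_le₀ (hmax u) (hpos ustar).le)
  have hsum : ∑ u ∈ S, ((#(S.filter (G.Adj u)) : ℝ) - 2) = 2 * edgesIn G S - 2 * #S := by
    rw [sum_sub_distrib, sum_const, nsmul_eq_mul, ← Nat.cast_sum,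
      sum_card_filter_adj_eq_two_mul_edgesIn]
    push_cast
    ring
  have hk' : (edgesIn G S : ℝ) + k ≤ 2 * #S := by exact_mod_cast hk
  rw [etaVal]
  linarith [sum_le_sum hterm]

theorem eta_bounds_min_degree_ge_two_general {V : Type} [Fintype V] [DecidableEq V]
    (G : SimpleGraph V) [DecidableRel G.Adj]
    (x : V → ℝ) (hpos : ∀ v, 0 < x v)
    (ustar : V) (hmax : ∀ v, x v ≤ x ustar)
    (hP6free : ¬ ContainsSub (SimpleGraph.pathGraph 6) (G.induce (G.neighborSet ustar)))
    (S : Finset V)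
    (hSnbr : ∀ v ∈ S, G.Adj ustar v)
    (hSconn : (G.induce (S : Set V)).Connected)
    (hdelta : ∀ u ∈ S, 2 ≤ (S.filter (fun w => G.Adj u w)).card) :
    etaVal G x ustar S ≤ 0 ∧
    (¬ Nonempty (G.induce (S : Set V) ≃g (⊤ : SimpleGraph (Fin 5))) →
      etaVal G x ustar S ≤ -1) ∧
    (¬ Nonempty (G.induce (S : Set V) ≃g (⊤ : SimpleGraph (Fin 5))) ∧
      ¬ Nonempty (G.induce (S : Set V) ≃g
          (⊤ : SimpleGraph (Fin 5)).deleteEdges {s(3, 4)}) →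
      etaVal G x ustar S ≤ -2) ∧
    (¬ Nonempty (G.induce (S : Set V) ≃g (⊤ : SimpleGraph (Fin 5))) ∧
      ¬ Nonempty (G.induce (S : Set V) ≃g
          (⊤ : SimpleGraph (Fin 5)).deleteEdges {s(3, 4)}) ∧
      ¬ Nonempty (G.induce (S : Set V) ≃g (⊤ : SimpleGraph (Fin 4))) ∧
      ¬ IsK5Minus2e (G.induce (S : Set V)) →
      etaVal G x ustar S ≤ -3) := by
  set H := G.induce (S : Set V)
  have hP6 : ¬ ContainsSub (pathGraph 6) H := fun h =>
    hP6free (h.trans_embedding (G.induceHomOfLE fun v hv => hSnbr v hv))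
  have hδ : ∀ v, 2 ≤ H.degree v := fun v => (degree_induce_eq_card_filter G S v).symm ▸ hdelta v v.2
  have hη : ∀ k : ℕ, #H.edgeFinset + k ≤ 2 * Fintype.card (S : Set V) →
      etaVal G x ustar S ≤ -k := fun k hk => etaVal_le_neg_of_edgesIn_add_le hpos hmax hdelta
    (by simpa [edgesIn_eq_card_edgeFinset_induce] using hk)
  rcases hSconn.card_edgeFinset_add_three_le_or hP6 hδ with he | ⟨hn, he⟩ | ⟨hn, he8, he10⟩
  · have : etaVal G x ustar S ≤ -3 := by exact_mod_cast hη 3 he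
    exact ⟨by linarith, fun _ => by linarith, fun _ => by linarith, fun _ => this⟩
  · have : etaVal G x ustar S ≤ -2 := by exact_mod_cast hη 2 (by omega)
    exact ⟨by linarith, fun _ => by linarith, fun _ => this,
      fun h => (h.2.2.1 (nonempty_iso_top_of_card_edgeFinset hn he)).elim⟩
  rcases (by omega : #H.edgeFinset = 8 ∨ #H.edgeFinset = 9 ∨ #H.edgeFinset = 10) with he | he | he
  · have : etaVal G x ustar S ≤ -2 := by exact_mod_cast hη 2 (by omega)
    exact ⟨by linarith, fun _ => by linarith, fun _ => this,
      fun h => (h.2.2.2 (isK5Minus2e_of_card_edgeFinset hn he)).elim⟩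
  · have : etaVal G x ustar S ≤ -1 := by exact_mod_cast hη 1 (by omega)
    have hK := nonempty_iso_top_deleteEdges_of_card_edgeFinset hn he
    exact ⟨by linarith, fun _ => this, fun h => (h.2 hK).elim, fun h => (h.2.1 hK).elim⟩
  · have hK := nonempty_iso_top_of_card_edgeFinset hn (he.trans rfl)
    exact ⟨by simpa using hη 0 (by omega), fun h => (h hK).elim, fun h => (h.1 hK).elim,
      fun h => (h.1 hK).elim⟩

/-- Bounds on `η(H)` for a non-trivial component `H = G[S]` of `G[N(u*)]`
with minimum degree at least 2, when `G[N(u*)]` is `P₆`-free. -/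
theorem eta_bounds_min_degree_ge_two {V : Type} [Fintype V] [DecidableEq V]
    (G : SimpleGraph V) [DecidableRel G.Adj] (hconn : G.Connected)
    (x : V → ℝ) (hpos : ∀ v, 0 < x v) (heig : G.adjMatrix ℝ *ᵥ x = specRad G • x)
    (ustar : V) (hmax : ∀ v, x v ≤ x ustar)
    (hP6free : ¬ ContainsSub (SimpleGraph.pathGraph 6) (G.induce (G.neighborSet ustar)))
    (S : Finset V)
    (hSnbr : ∀ v ∈ S, G.Adj ustar v)
    (hSconn : (G.induce (S : Set V)).Connected)
    (hSclosed : ∀ a ∈ S, ∀ b, G.Adj ustar b → G.Adj a b → b ∈ S)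
    (hScard : 2 ≤ S.card)
    (hdelta : ∀ u ∈ S, 2 ≤ (S.filter (fun w => G.Adj u w)).card) :
    etaVal G x ustar S ≤ 0 ∧
    (¬ Nonempty (G.induce (S : Set V) ≃g (⊤ : SimpleGraph (Fin 5))) →
      etaVal G x ustar S ≤ -1) ∧
    (¬ Nonempty (G.induce (S : Set V) ≃g (⊤ : SimpleGraph (Fin 5))) ∧
      ¬ Nonempty (G.induce (S : Set V) ≃g
          (⊤ : SimpleGraph (Fin 5)).deleteEdges {s(3, 4)}) →
      etaVal G x ustar S ≤ -2) ∧
    (¬ Nonempty (G.induce (S : Set V) ≃g (⊤ : SimpleGraph (Fin 5))) ∧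
      ¬ Nonempty (G.induce (S : Set V) ≃g
          (⊤ : SimpleGraph (Fin 5)).deleteEdges {s(3, 4)}) ∧
      ¬ Nonempty (G.induce (S : Set V) ≃g (⊤ : SimpleGraph (Fin 4))) ∧
      ¬ IsK5Minus2e (G.induce (S : Set V)) →
      etaVal G x ustar S ≤ -3) :=
  eta_bounds_min_degree_ge_two_general G x hpos ustar hmax hP6free S hSnbr hSconn hdelta
end

section
/- Let G be a connected finite simple graph with m edges, x a Perron vector of G, and u* a vertex at which x attains its maximum. With A = N(u*), A_+ the set of vertices of A having a neighbor in A, and B = V(G) \ (A ∪ {u*}), one has ρ(G)² ≤ m − e(B) + e(A_+); in particular ρ(G)² ≤ m + e(A_+). -/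
open Matrix Finset

/-!
Iterating the eigen-equation at the maximising vertex `u*` gives
`ρ² x(u*) = ∑_{u ∈ A} ∑_{v ∼ u} x(v) ≤ x(u*) ∑_{u ∈ A} d(u)`, so `ρ² ≤ ∑_{u ∈ A} d(u)`.
Counting `∑_{u ∈ A} d(u)` edge by edge, every edge meets `A` once, except that edges inside `A`
meet it twice and edges inside `B` not at all (edges at `u*` end in `A`), whence
`∑_{u ∈ A} d(u) = m + e(A) − e(B)`; finally `e(A) = e(A₊)`.
-/

namespace SimpleGraph

variable {V : Type} [Fintype V] (G : SimpleGraph V) [DecidableRel G.Adj]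

lemma sq_le_sum_degree_neighborFinset {t : ℝ} {x : V → ℝ} (hx : G.adjMatrix ℝ *ᵥ x = t • x)
    {u : V} (hmax : ∀ v, x v ≤ x u) (hu : 0 < x u) :
    t ^ 2 ≤ ∑ w ∈ G.neighborFinset u, (G.degree w : ℝ) := by
  have heig (v : V) : t * x v = ∑ w ∈ G.neighborFinset v, x w := by
    rw [← adjMatrix_mulVec_apply, hx, Pi.smul_apply, smul_eq_mul]
  refine le_of_mul_le_mul_right ?_ hu
  calc t ^ 2 * x u = ∑ w ∈ G.neighborFinset u, t * x w := by
        rw [sq, mul_assoc, heig, mul_sum]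
    _ = ∑ w ∈ G.neighborFinset u, ∑ v ∈ G.neighborFinset w, x v := sum_congr rfl fun w _ => heig w
    _ ≤ ∑ w ∈ G.neighborFinset u, (G.degree w : ℝ) * x u := by
        gcongr with w
        rw [← card_neighborFinset_eq_degree]
        simpa only [nsmul_eq_mul] using sum_le_card_nsmul _ x (x u) fun v _ => hmax v
    _ = (∑ w ∈ G.neighborFinset u, (G.degree w : ℝ)) * x u := (sum_mul ..).symm

variable [DecidableEq V]

lemma edgesIn_eq_card_filter (S : Finset V) :
    edgesIn G (S : Set V) = #{e ∈ G.edgeFinset | ∀ v ∈ e, v ∈ S} := by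
  rw [edgesIn, ← Set.ncard_coe_finset]
  congr 1
  ext e
  simp

lemma edgesIn_filter_exists_adj_mem (S : Finset V) :
    edgesIn G ({u ∈ S | ∃ w ∈ S, G.Adj u w} : Finset V) = edgesIn G (S : Set V) := by
  simp only [edgesIn_eq_card_filter]
  congr 1
  refine filter_congr fun e he => ?_
  induction e with
  | _ a b =>
    rw [mem_edgeFinset, mem_edgeSet] at he
    simp only [Sym2.mem_iff, forall_eq_or_imp, forall_eq, mem_filter]
    exact ⟨fun h => ⟨h.1.1, h.2.1⟩, fun h => ⟨⟨h.1, b, h.2, he⟩, h.2, a, h.1, he.symm⟩⟩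

lemma sum_degree_eq_sum_card_filter_mem (S : Finset V) :
    ∑ u ∈ S, G.degree u = ∑ e ∈ G.edgeFinset, #{u ∈ S | u ∈ e} := by
  simp only [← card_incidenceFinset_eq_degree, incidenceFinset_eq_filter]
  exact sum_card_bipartiteAbove_eq_sum_card_bipartiteBelow (· ∈ ·)

lemma card_filter_mem_add_ite_eq (u : V) {a b : V} (hab : G.Adj a b) :
    #{w ∈ G.neighborFinset u | w ∈ s(a, b)} +
        (if ∀ v ∈ s(a, b), v ∈ univ \ insert u (G.neighborFinset u) then 1 else 0) =
      1 + if ∀ v ∈ s(a, b), v ∈ G.neighborFinset u then 1 else 0 := by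
  have hfilter : {w ∈ G.neighborFinset u | w ∈ s(a, b)} =
      {w ∈ G.neighborFinset u | w = a} ∪ {w ∈ G.neighborFinset u | w = b} := by
    simp only [Sym2.mem_iff, filter_or]
  have hdisj : Disjoint {w ∈ G.neighborFinset u | w = a} {w ∈ G.neighborFinset u | w = b} :=
    disjoint_filter.mpr fun w _ hwa hwb => G.ne_of_adj hab (hwa.symm.trans hwb)
  rw [hfilter, card_union_of_disjoint hdisj, filter_eq', filter_eq']
  by_cases hau : a = u
  · subst hau
    simp [hab]
  by_cases hbu : b = u
  · subst hbu
    simp [hab.symm, G.ne_of_adj hab]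
  by_cases ha : G.Adj u a <;> by_cases hb : G.Adj u b <;> simp [ha, hb, hau, hbu]

lemma sum_degree_neighborFinset_add_edgesIn (u : V) :
    ∑ w ∈ G.neighborFinset u, G.degree w +
        edgesIn G ((univ \ insert u (G.neighborFinset u) : Finset V) : Set V) =
      #G.edgeFinset + edgesIn G (G.neighborFinset u : Set V) := by
  rw [sum_degree_eq_sum_card_filter_mem, edgesIn_eq_card_filter, edgesIn_eq_card_filter,
    card_filter, card_filter, card_eq_sum_ones, ← sum_add_distrib, ← sum_add_distrib]
  refine sum_congr rfl fun e he => ?_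
  induction e with
  | _ a b => exact card_filter_mem_add_ite_eq G u (G.mem_edgeSet.mp (G.mem_edgeFinset.mp he))

end SimpleGraph

theorem specRad_sq_le_general (m : ℕ) {V : Type} [Fintype V] [DecidableEq V]
    (G : SimpleGraph V) [DecidableRel G.Adj]
    (hsize : G.edgeFinset.card = m)
    (x : V → ℝ) (hpos : ∀ v, 0 < x v) (heig : G.adjMatrix ℝ *ᵥ x = specRad G • x)
    (ustar : V) (hmax : ∀ v, x v ≤ x ustar)
    (A Aplus B : Finset V)
    (hA : A = G.neighborFinset ustar)
    (hAplus : Aplus = A.filter (fun u => ∃ w ∈ A, G.Adj u w))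
    (hB : B = Finset.univ \ insert ustar A) :
    (specRad G) ^ 2 ≤ (m : ℝ) - edgesIn G (B : Set V) + edgesIn G (Aplus : Set V) ∧
    (specRad G) ^ 2 ≤ (m : ℝ) + edgesIn G (Aplus : Set V) := by
  subst hA hAplus hB
  rw [G.edgesIn_filter_exists_adj_mem, ← hsize]
  have hρ := G.sq_le_sum_degree_neighborFinset heig hmax (hpos ustar)
  have hcount := congrArg (Nat.cast (R := ℝ)) (G.sum_degree_neighborFinset_add_edgesIn ustar)
  simp only [Nat.cast_add, Nat.cast_sum] at hcount
  have hmain : specRad G ^ 2 ≤ (#G.edgeFinset : ℝ) -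
      edgesIn G ((univ \ insert ustar (G.neighborFinset ustar) : Finset V) : Set V) +
      edgesIn G (G.neighborFinset ustar : Set V) := by linarith
  exact ⟨hmain, hmain.trans (by gcongr; exact sub_le_self _ (Nat.cast_nonneg _))⟩

/-- For a connected graph `G` with `m` edges, a Perron vector `x` maximized
at `u*`, `A = N(u*)`, `A₊` the vertices of `A` with a neighbor in `A`, and
`B = V ∖ (A ∪ {u*})`: `ρ(G)² ≤ m − e(B) + e(A₊)`, and in particular `ρ(G)² ≤ m + e(A₊)`. -/
theorem specRad_sq_le (m : ℕ) {V : Type} [Fintype V] [DecidableEq V]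
    (G : SimpleGraph V) [DecidableRel G.Adj] (hconn : G.Connected)
    (hsize : G.edgeFinset.card = m)
    (x : V → ℝ) (hpos : ∀ v, 0 < x v) (heig : G.adjMatrix ℝ *ᵥ x = specRad G • x)
    (ustar : V) (hmax : ∀ v, x v ≤ x ustar)
    (A Aplus B : Finset V)
    (hA : A = G.neighborFinset ustar)
    (hAplus : Aplus = A.filter (fun u => ∃ w ∈ A, G.Adj u w))
    (hB : B = Finset.univ \ insert ustar A) :
    (specRad G) ^ 2 ≤ (m : ℝ) - edgesIn G (B : Set V) + edgesIn G (Aplus : Set V) ∧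
    (specRad G) ^ 2 ≤ (m : ℝ) + edgesIn G (Aplus : Set V) :=
  specRad_sq_le_general m G hsize x hpos heig ustar hmax A Aplus B hA hAplus hB
end

section
/- Let G be a connected finite simple graph with m edges, x a Perron vector of G, and u* a vertex at which x attains its maximum value x_{u*}. Set A = N(u*), A_0 = {u ∈ A : u has no neighbor in A}, A_+ = A \ A_0, B = V(G) \ (A ∪ {u*}), and write d_A(u) = |N(u) ∩ A|. If ρ(G)² − 2ρ(G) ≥ m − 3, then e(B) ≤ Σ_{u ∈ A_+} (d_A(u) − 2)·x_u/x_{u*} − e(A_+) − 2·Σ_{v ∈ A_0} x_v/x_{u*} + 3. -/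
open Matrix Finset

/-!
Write `A = N(u*)`, `B` for the vertices outside `{u*} ∪ A`, `x* = x_{u*}` and `d_A(v) = |N(v) ∩ A|`.
Counting walks of length two from `u*`, and using `x_b ≤ x*` on `B`,

    ρ² x* = |A| x* + Σ_{a ∈ A} d_A(a) x_a + Σ_{b ∈ B} d_A(b) x_b
          ≤ |A| x* + Σ_{a ∈ A} d_A(a) x_a + e(A, B) x*,

while `ρ x* = Σ_{a ∈ A} x_a` and `m = |A| + e(A) + e(A, B) + e(B)`. The vertices of `A₀` have
`d_A = 0` and lie on no edge inside `A`, so `e(A) = e(A₊)`; substituting all this into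
`(m - 3) x* ≤ (ρ² - 2ρ) x*` and dividing by `x*` gives the bound.
-/

lemma Finset.sum_univ_eq_add_sum_add_sum_sdiff_insert {α M : Type*} [Fintype α] [DecidableEq α]
    [AddCommMonoid M] {a : α} {s : Finset α} (ha : a ∉ s) (f : α → M) :
    ∑ b, f b = f a + ∑ b ∈ s, f b + ∑ b ∈ univ \ insert a s, f b := by
  rw [← sum_sdiff (subset_univ (insert a s)), sum_insert ha, add_comm]

namespace SimpleGraph

variable {V : Type*} (G : SimpleGraph V) [DecidableRel G.Adj]

lemma sum_card_filter_adj_comm (S T : Finset V) :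
    ∑ s ∈ S, #(T.filter (G.Adj s)) = ∑ t ∈ T, #(S.filter (G.Adj t)) := by
  simpa only [bipartiteAbove, bipartiteBelow, G.adj_comm] using
    sum_card_bipartiteAbove_eq_sum_card_bipartiteBelow (s := S) (t := T) G.Adj

variable [Fintype V]

section Eigenvector

variable {G} {ρ : ℝ} {x : V → ℝ}

lemma mul_apply_eq_sum_neighborFinset (heig : G.adjMatrix ℝ *ᵥ x = ρ • x) (v : V) :
    ρ * x v = ∑ w ∈ G.neighborFinset v, x w := by
  rw [← adjMatrix_mulVec_apply, heig, Pi.smul_apply, smul_eq_mul]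

lemma sum_sum_neighborFinset_eq (S : Finset V) (f : V → ℝ) :
    ∑ a ∈ S, ∑ w ∈ G.neighborFinset a, f w = ∑ w, #(S.filter (G.Adj w)) * f w := by
  simp_rw [neighborFinset_eq_filter, sum_filter]
  rw [sum_comm]
  refine sum_congr rfl fun w _ => ?_
  rw [← sum_filter, sum_const, nsmul_eq_mul]
  simp_rw [G.adj_comm _ w]

lemma sq_mul_apply (heig : G.adjMatrix ℝ *ᵥ x = ρ • x) (u : V) :
    ρ ^ 2 * x u = ∑ w, #((G.neighborFinset u).filter (G.Adj w)) * x w := by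
  rw [sq, mul_assoc, mul_apply_eq_sum_neighborFinset heig, mul_sum,
    sum_congr rfl fun a _ => mul_apply_eq_sum_neighborFinset heig a, sum_sum_neighborFinset_eq]

end Eigenvector

lemma two_mul_edgesIn (S : Finset V) :
    2 * edgesIn G S = ∑ u ∈ S, #(S.filter (G.Adj u)) := by
  classical
  let H := ((⊤ : G.Subgraph).induce (S : Set V)).spanningCoe
  have hedges : {e ∈ G.edgeSet | ∀ v ∈ e, v ∈ (S : Set V)} = H.edgeSet := by
    ext e
    induction e using Sym2.ind with
    | _ a b => simp [H, and_comm, and_assoc]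
  have hdeg : ∀ v, H.degree v = if v ∈ S then #(S.filter (G.Adj v)) else 0 := by
    intro v
    split_ifs with hv
    · unfold degree; congr 1; ext w; simp [H, hv]
    · rw [degree, card_eq_zero, eq_empty_iff_forall_notMem]; simp [H, hv]
  rw [edgesIn, hedges, ← coe_edgeFinset, Set.ncard_coe_finset,
    ← sum_degrees_eq_twice_card_edges]
  simp [hdeg]

lemma edgesIn_univ : edgesIn G (univ : Finset V) = #G.edgeFinset := by
  rw [edgesIn, coe_univ, ← coe_edgeFinset, ← Set.ncard_coe_finset]
  congr 1
  ext e
  simp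

variable [DecidableEq V]

lemma edgesIn_union {S T : Finset V} (hST : Disjoint S T) :
    edgesIn G ↑(S ∪ T) = edgesIn G S + edgesIn G T + ∑ t ∈ T, #(S.filter (G.Adj t)) := by
  have hsplit : ∀ v,
      #((S ∪ T).filter (G.Adj v)) = #(S.filter (G.Adj v)) + #(T.filter (G.Adj v)) :=
    fun v => by rw [filter_union, card_union_of_disjoint (disjoint_filter_filter hST)]
  have hcomm := G.sum_card_filter_adj_comm S T
  have h := G.two_mul_edgesIn (S ∪ T)
  rw [sum_union hST, sum_congr rfl (fun v _ => hsplit v), sum_congr rfl (fun v _ => hsplit v),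
    sum_add_distrib, sum_add_distrib, ← G.two_mul_edgesIn S, ← G.two_mul_edgesIn T] at h
  omega

lemma edgesIn_insert {v : V} {S : Finset V} (hv : v ∉ S) :
    edgesIn G ↑(insert v S) = edgesIn G S + #(S.filter (G.Adj v)) := by
  have hv0 : edgesIn G ({v} : Finset V) = 0 := by
    simpa [filter_singleton] using G.two_mul_edgesIn {v}
  rw [insert_eq, union_comm, G.edgesIn_union (disjoint_singleton_right.2 hv), hv0, sum_singleton,
    add_zero]

lemma edgesIn_sdiff_of_forall_not_adj {S R : Finset V} (hRS : R ⊆ S)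
    (hR : ∀ v ∈ R, ∀ w ∈ S, ¬ G.Adj v w) : edgesIn G ↑(S \ R) = edgesIn G S := by
  have hdeg : ∀ T ⊆ S, ∀ v ∈ R, #(T.filter (G.Adj v)) = 0 := fun T hT v hv =>
    card_eq_zero.2 (filter_eq_empty_iff.2 fun w hw => hR v hv w (hT hw))
  have hR0 : edgesIn G R = 0 := by
    have := G.two_mul_edgesIn R
    rw [sum_eq_zero (hdeg R hRS)] at this
    omega
  conv_rhs => rw [← sdiff_union_of_subset hRS]
  rw [G.edgesIn_union sdiff_disjoint, hR0, sum_eq_zero (hdeg _ sdiff_subset), add_zero, add_zero]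

lemma card_edgeFinset_eq_degree_add_edgesIn (u : V) :
    #G.edgeFinset = G.degree u + edgesIn G ↑(G.neighborFinset u)
      + ∑ b ∈ univ \ insert u (G.neighborFinset u), #((G.neighborFinset u).filter (G.Adj b))
      + edgesIn G ↑(univ \ insert u (G.neighborFinset u)) := by
  set A := G.neighborFinset u
  have huA : u ∉ A := G.notMem_neighborFinset_self u
  have hAu : A.filter (G.Adj u) = A :=
    filter_true_of_mem fun a ha => (G.mem_neighborFinset u a).1 ha
  have hB : ∀ b ∈ univ \ insert u A, (insert u A).filter (G.Adj b) = A.filter (G.Adj b) := by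
    intro b hb
    rw [filter_insert, if_neg]
    rw [mem_sdiff, mem_insert, not_or] at hb
    exact fun hbu => hb.2.2 ((G.mem_neighborFinset u b).2 hbu.symm)
  have hsplit := G.edgesIn_union (disjoint_sdiff (s := insert u A) (t := univ))
  rw [union_sdiff_of_subset (subset_univ _), edgesIn_univ, G.edgesIn_insert huA, hAu,
    sum_congr rfl fun b hb => congrArg card (hB b hb)] at hsplit
  rw [hsplit, ← card_neighborFinset_eq_degree]
  ring

section MaximalEntry

variable {G} {ρ : ℝ} {x : V → ℝ} {u : V}

lemma sq_mul_apply_le (heig : G.adjMatrix ℝ *ᵥ x = ρ • x) (hmax : ∀ v, x v ≤ x u) :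
    ρ ^ 2 * x u ≤ G.degree u * x u
      + ∑ a ∈ G.neighborFinset u, #((G.neighborFinset u).filter (G.Adj a)) * x a
      + (∑ b ∈ univ \ insert u (G.neighborFinset u),
          (#((G.neighborFinset u).filter (G.Adj b)) : ℝ)) * x u := by
  have hAu : (G.neighborFinset u).filter (G.Adj u) = G.neighborFinset u :=
    filter_true_of_mem fun a ha => (G.mem_neighborFinset u a).1 ha
  rw [sq_mul_apply heig,
    sum_univ_eq_add_sum_add_sum_sdiff_insert (G.notMem_neighborFinset_self u), hAu,
    card_neighborFinset_eq_degree, sum_mul]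
  gcongr with b
  exact hmax b

lemma edgesIn_compl_insert_neighborFinset_mul_le {A A₀ : Finset V}
    (heig : G.adjMatrix ℝ *ᵥ x = ρ • x) (hmax : ∀ v, x v ≤ x u) (hu : 0 ≤ x u)
    (hA : A = G.neighborFinset u) (hA₀ : A₀ ⊆ A)
    (hA₀A : ∀ v ∈ A₀, ∀ w ∈ A, ¬ G.Adj v w) (hρ : (#G.edgeFinset : ℝ) - 3 ≤ ρ ^ 2 - 2 * ρ) :
    edgesIn G ↑(univ \ insert u A) * x u
      ≤ ∑ a ∈ A \ A₀, (#(A.filter (G.Adj a)) - 2 : ℝ) * x a - edgesIn G ↑(A \ A₀) * x u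
        - 2 * ∑ v ∈ A₀, x v + 3 * x u := by
  subst hA
  have hm := congrArg (Nat.cast : ℕ → ℝ) (G.card_edgeFinset_eq_degree_add_edgesIn u)
  simp only [Nat.cast_add, Nat.cast_sum] at hm
  have hsq := sq_mul_apply_le heig hmax
  have hρx := mul_apply_eq_sum_neighborFinset heig u
  have heA := G.edgesIn_sdiff_of_forall_not_adj hA₀ hA₀A
  have hdA : ∑ a ∈ G.neighborFinset u, #((G.neighborFinset u).filter (G.Adj a)) * x a
      = ∑ a ∈ G.neighborFinset u \ A₀, #((G.neighborFinset u).filter (G.Adj a)) * x a := by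
    rw [← sum_sdiff hA₀, add_eq_left]
    refine sum_eq_zero fun v hv => ?_
    rw [card_eq_zero.2 (filter_eq_empty_iff.2 fun w hw => hA₀A v hv w hw), Nat.cast_zero,
      zero_mul]
  have hxA := (sum_sdiff hA₀ (f := x)).symm
  simp only [sub_mul, sum_sub_distrib, ← mul_sum]
  have hρu := mul_le_mul_of_nonneg_right hρ hu
  rw [hm] at hρu
  rw [heA]
  linarith

end MaximalEntry

end SimpleGraph

theorem edges_B_le_eta_sum_general (m : ℕ) {V : Type} [Fintype V] [DecidableEq V]
    (G : SimpleGraph V) [DecidableRel G.Adj]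
    (hsize : G.edgeFinset.card = m)
    (x : V → ℝ) (hpos : ∀ v, 0 < x v) (heig : G.adjMatrix ℝ *ᵥ x = specRad G • x)
    (ustar : V) (hmax : ∀ v, x v ≤ x ustar)
    (A A0 Aplus B : Finset V)
    (hA : A = G.neighborFinset ustar)
    (hA0 : A0 = A.filter (fun u => ∀ w ∈ A, ¬ G.Adj u w))
    (hAplus : Aplus = A \ A0)
    (hB : B = Finset.univ \ insert ustar A)
    (hrho : (specRad G) ^ 2 - 2 * specRad G ≥ (m : ℝ) - 3) :
    (edgesIn G (B : Set V) : ℝ) ≤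
      (∑ u ∈ Aplus, (((A.filter (fun w => G.Adj u w)).card : ℝ) - 2) * x u / x ustar)
        - edgesIn G (Aplus : Set V) - 2 * (∑ v ∈ A0, x v / x ustar) + 3 := by
  subst hA0 hAplus hB hsize
  have hx := hpos ustar
  have key := SimpleGraph.edgesIn_compl_insert_neighborFinset_mul_le heig hmax hx.le hA
    (filter_subset _ A) (fun v hv => (mem_filter.1 hv).2) hrho
  rw [← sum_div, ← sum_div, show ∀ s e t : ℝ, s / x ustar - e - 2 * (t / x ustar) + 3
      = (s - e * x ustar - 2 * t + 3 * x ustar) / x ustar from fun s e t => by field_simp,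
    le_div_iff₀ hx]
  exact key

/-- For a connected graph `G` with `m` edges, a Perron vector `x` maximized
at `u*`, with `A = N(u*)`, `A₀` the isolated part, `A₊ = A ∖ A₀` and `B = V ∖ (A ∪ {u*})`:
if `ρ² − 2ρ ≥ m − 3`, then
`e(B) ≤ Σ_{u ∈ A₊} (d_A(u) − 2)x_u/x_{u*} − e(A₊) − 2Σ_{v ∈ A₀} x_v/x_{u*} + 3`. -/
theorem edges_B_le_eta_sum (m : ℕ) {V : Type} [Fintype V] [DecidableEq V]
    (G : SimpleGraph V) [DecidableRel G.Adj] (hconn : G.Connected)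
    (hsize : G.edgeFinset.card = m)
    (x : V → ℝ) (hpos : ∀ v, 0 < x v) (heig : G.adjMatrix ℝ *ᵥ x = specRad G • x)
    (ustar : V) (hmax : ∀ v, x v ≤ x ustar)
    (A A0 Aplus B : Finset V)
    (hA : A = G.neighborFinset ustar)
    (hA0 : A0 = A.filter (fun u => ∀ w ∈ A, ¬ G.Adj u w))
    (hAplus : Aplus = A \ A0)
    (hB : B = Finset.univ \ insert ustar A)
    (hrho : (specRad G) ^ 2 - 2 * specRad G ≥ (m : ℝ) - 3) :
    (edgesIn G (B : Set V) : ℝ) ≤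
      (∑ u ∈ Aplus, (((A.filter (fun w => G.Adj u w)).card : ℝ) - 2) * x u / x ustar)
        - edgesIn G (Aplus : Set V) - 2 * (∑ v ∈ A0, x v / x ustar) + 3 :=
  edges_B_le_eta_sum_general m G hsize x hpos heig ustar hmax A A0 Aplus B hA hA0 hAplus hB hrho
end

section
/- Let G be a connected finite simple graph with m edges that is H_7-free, let x be a Perron vector of G and u* a vertex at which x attains its maximum. Set A = N(u*) and B = V(G) \ (A ∪ {u*}). If ρ(G)² − 2ρ(G) ≥ m − 3, then e(B) ≤ 3. -/
open Matrix Finset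

/-! Write `A = N(u*)`, `B` for the rest and `d_A(w)` for the number of neighbours of `w` in `A`.
Expanding `ρ² x_{u*} = Σ_{v ∈ A} ρ x_v` over walks of length two and bounding every `x_w` by
`x_{u*}` gives `ρ² − 2ρ ≤ |A| + Σ_{w ∈ A} (d_A(w) − 2)⁺ + e(A, B)` (the positive part is truncated
subtraction in `ℕ`), while `m = |A| + e(A) + e(A, B) + e(B)`. As `u*` is adjacent to all of `A`,
`H₇`-freeness says that `G[A]` has no path on six vertices, and such a graph satisfies
`Σ_{w ∈ A} (d_A(w) − 2)⁺ ≤ e(A)`: deleting a vertex of degree at most two keeps the inequality,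
and once all degrees are at least three a longest-path argument bounds them by four. Hence
`m − 3 ≤ ρ² − 2ρ ≤ m − e(B)`. -/

section

variable {V : Type*} {G : SimpleGraph V} {A : Finset V}

def IsPathIn (G : SimpleGraph V) (A : Finset V) (l : List V) : Prop :=
  l.IsChain G.Adj ∧ l.Nodup ∧ ∀ v ∈ l, v ∈ A

namespace IsPathIn

theorem mono {A' : Finset V} {l : List V} (hl : IsPathIn G A l) (h : A ⊆ A') :
    IsPathIn G A' l :=
  ⟨hl.1, hl.2.1, fun v hv => h (hl.2.2 v hv)⟩

theorem reverse {l : List V} (hl : IsPathIn G A l) : IsPathIn G A l.reverse :=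
  ⟨List.isChain_reverse.2 (hl.1.imp fun _ _ h => h.symm), List.nodup_reverse.2 hl.2.1,
    fun v hv => hl.2.2 v (List.mem_reverse.1 hv)⟩

theorem cons {a u : V} {l : List V} (hl : IsPathIn G A (a :: l)) (hu : u ∈ A) (hua : G.Adj u a)
    (hul : u ∉ a :: l) : IsPathIn G A (u :: a :: l) :=
  ⟨List.isChain_cons_cons.2 ⟨hua, hl.1⟩, List.nodup_cons.2 ⟨hul, hl.2.1⟩,
    List.forall_mem_cons.2 ⟨hu, hl.2.2⟩⟩

end IsPathIn

theorem exists_pathIn_of_cycle {l : List V} (hc : Cycle.Chain G.Adj (l : Cycle V))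
    (hn : l.Nodup) (hA : ∀ v ∈ l, v ∈ A) {v u : V} (hv : v ∈ l) (hu : u ∈ A) (hvu : G.Adj v u)
    (hul : u ∉ l) : ∃ l', IsPathIn G A l' ∧ l'.length = l.length + 1 ∧ ∀ w ∈ l, w ∈ l' := by
  obtain ⟨s, t, rfl⟩ := List.append_of_mem hv
  have hrot : (↑(s ++ v :: t) : Cycle V) = ↑(v :: (t ++ s)) := by
    rw [Cycle.coe_eq_coe, ← List.cons_append]; exact List.isRotated_append
  rw [hrot, Cycle.chain_coe_cons] at hc
  have hperm : (v :: (t ++ s)).Perm (s ++ v :: t) := by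
    rw [← List.cons_append]; exact List.perm_append_comm
  refine ⟨u :: v :: (t ++ s), ?_, by simp; omega, fun w hw => ?_⟩
  · refine IsPathIn.cons ⟨hc.left_of_append, hperm.nodup_iff.2 hn,
      fun w hw => hA w (hperm.subset hw)⟩ hu hvu.symm (fun h => hul (hperm.subset h))
  · exact List.mem_cons_of_mem _ (hperm.symm.subset hw)

def IsLongestPathThrough (G : SimpleGraph V) (A : Finset V) (v : V) (l : List V) : Prop :=
  IsPathIn G A l ∧ v ∈ l ∧ ∀ l', IsPathIn G A l' → v ∈ l' → l'.length ≤ l.length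

theorem exists_isLongestPathThrough {k : ℕ} (hP : ∀ l, IsPathIn G A l → l.length ≤ k)
    {v : V} (hv : v ∈ A) : ∃ l, IsLongestPathThrough G A v l := by
  classical
  let P n := ∃ l, IsPathIn G A l ∧ v ∈ l ∧ l.length = n
  have hv' : IsPathIn G A [v] := ⟨List.isChain_singleton _, List.nodup_singleton _, by simpa⟩
  obtain ⟨l, hl, hvl, hlen⟩ := Nat.findGreatest_spec (P := P) (hP _ hv') ⟨[v], hv', by simp, rfl⟩
  exact ⟨l, hl, hvl, fun l' hl' hvl' => hlen ▸ Nat.le_findGreatest (hP l' hl') ⟨l', hl', hvl', rfl⟩⟩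

namespace IsLongestPathThrough

variable {v : V} {l : List V}

theorem reverse (h : IsLongestPathThrough G A v l) : IsLongestPathThrough G A v l.reverse :=
  ⟨h.1.reverse, List.mem_reverse.2 h.2.1, fun l' hl' hv => (l.length_reverse) ▸ h.2.2 l' hl' hv⟩

theorem filter_adj_head_subset [DecidableEq V] [DecidableRel G.Adj] {a : V}
    (h : IsLongestPathThrough G A v (a :: l)) : {w ∈ A | G.Adj a w} ⊆ l.toFinset := by
  intro w hw
  obtain ⟨hwA, haw⟩ := mem_filter.1 hw
  by_contra hwl
  have hwal : w ∉ a :: l := by simpa [(G.ne_of_adj haw).symm] using hwl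
  have := h.2.2 _ (h.1.cons hwA haw.symm hwal) (List.mem_cons_of_mem _ h.2.1)
  simp at this

theorem not_cycle_of_perm {u : V} {c : List V} (h : IsLongestPathThrough G A v l) (hu : u ∈ A)
    (hvu : G.Adj v u) (hul : u ∉ l) (hc : c.Perm l) : ¬ Cycle.Chain G.Adj (c : Cycle V) := by
  intro hcyc
  obtain ⟨l', hl', hlen, hsub⟩ := exists_pathIn_of_cycle hcyc (hc.nodup_iff.2 h.1.2.1)
    (fun w hw => h.1.2.2 w (hc.subset hw)) (hc.symm.subset h.2.1) hu hvu
    (fun h => hul (hc.subset h))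
  have := h.2.2 l' hl' (hsub _ (hc.symm.subset h.2.1))
  rw [hlen, hc.length_eq] at this
  omega

end IsLongestPathThrough

theorem exists_adj_notMem_of_length_le [DecidableEq V] [DecidableRel G.Adj] {v : V}
    {l : List V} (hv : v ∈ l) (hlen : l.length ≤ #{w ∈ A | G.Adj v w}) :
    ∃ u ∈ A, G.Adj v u ∧ u ∉ l := by
  by_contra! h
  have hsub : {w ∈ A | G.Adj v w} ⊆ l.toFinset.erase v := fun w hw => by
    obtain ⟨hwA, hvw⟩ := mem_filter.1 hw
    exact mem_erase.2 ⟨(G.ne_of_adj hvw).symm, List.mem_toFinset.2 (h w hwA hvw)⟩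
  have := (card_le_card hsub).trans_eq (card_erase_of_mem (List.mem_toFinset.2 hv))
  have := l.toFinset_card_le
  have := List.length_pos_of_mem hv
  omega

theorem forall_adj_of_neighbors_subset [DecidableEq V] [DecidableRel G.Adj] {a : V} {r : List V}
    (hsub : {w ∈ A | G.Adj a w} ⊆ r.toFinset) (hr : r.length ≤ #{w ∈ A | G.Adj a w}) :
    ∀ w ∈ r, G.Adj a w := by
  have := eq_of_subset_of_card_le hsub ((r.toFinset_card_le).trans hr)
  intro w hw
  have hw' : w ∈ {w ∈ A | G.Adj a w} := this ▸ List.mem_toFinset.2 hw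
  exact (mem_filter.1 hw').2

/- Take a longest path through `v₀` and a neighbour `u` of `v₀` off it. The ends of the path have
all their (at least three) neighbours on it, which forces its vertices to carry a Hamiltonian
cycle; opening that cycle at `v₀` and appending `u` gives a longer path. -/
theorem card_filter_adj_le_four [DecidableEq V] [DecidableRel G.Adj]
    (hP : ∀ l, IsPathIn G A l → l.length ≤ 5) (hdeg : ∀ v ∈ A, 3 ≤ #{w ∈ A | G.Adj v w})
    {v₀ : V} (hv₀ : v₀ ∈ A) : #{w ∈ A | G.Adj v₀ w} ≤ 4 := by
  by_contra! hbig
  obtain ⟨l, hl⟩ := exists_isLongestPathThrough hP hv₀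
  obtain ⟨u, huA, hvu, hul⟩ := exists_adj_notMem_of_length_le (G := G) (A := A) hl.2.1
    (by have := hP l hl.1; omega)
  have no_cycle := fun (c : List V) (hc : c.Perm l) => hl.not_cycle_of_perm huA hvu hul hc
  rcases l with _ | ⟨a, r⟩
  · exact List.not_mem_nil hl.2.1
  have hsub := hl.filter_adj_head_subset
  have h3 := hdeg a (hl.1.2.2 a List.mem_cons_self)
  have hlen := hP _ hl.1
  have hdeg_le := (card_le_card hsub).trans r.toFinset_card_le
  have hchain := hl.1.1
  rcases r with _ | ⟨b, _ | ⟨c, _ | ⟨d, _ | ⟨e, _ | ⟨f, r⟩⟩⟩⟩⟩ <;>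
    simp only [List.length_cons, List.length_nil] at hlen hdeg_le <;> try omega
  · simp only [List.isChain_cons_cons, List.isChain_singleton, and_true] at hchain
    obtain ⟨hab, hbc, hcd⟩ := hchain
    have had := forall_adj_of_neighbors_subset hsub (by simp; omega) d (by simp)
    exact no_cycle _ (.refl _) (by simp [List.isChain_cons_cons, hab, hbc, hcd, had.symm])
  · simp only [List.isChain_cons_cons, List.isChain_singleton, and_true] at hchain
    obtain ⟨hab, hbc, hcd, hde⟩ := hchain
    by_cases hae : G.Adj a e
    · exact no_cycle _ (.refl _)
        (by simp [List.isChain_cons_cons, hab, hbc, hcd, hde, hae.symm])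
    -- Otherwise both ends are adjacent to exactly `b, c, d`, and `a b e d c` closes a cycle.
    have hac : G.Adj a c := by
      refine forall_adj_of_neighbors_subset (r := [b, c, d]) (fun w hw => ?_) (by simp; omega)
        c (by simp)
      have hwe : w ≠ e := by rintro rfl; exact hae (mem_filter.1 hw).2
      simpa [hwe] using hsub hw
    have hl' : IsLongestPathThrough G A v₀ [e, d, c, b, a] := by simpa using hl.reverse
    have heb : G.Adj e b := by
      refine forall_adj_of_neighbors_subset (r := [d, c, b]) (fun w hw => ?_)
        (by simpa using hdeg e (hl.1.2.2 e (by simp))) b (by simp)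
      have hwa : w ≠ a := by rintro rfl; exact hae (mem_filter.1 hw).2.symm
      simpa [hwa] using hl'.filter_adj_head_subset hw
    exact no_cycle [a, b, e, d, c] (((List.reverse_perm [c, d, e]).cons b).cons a)
      (by simp [List.isChain_cons_cons, hab, heb.symm, hde.symm, hcd.symm, hac.symm])

theorem two_mul_sum_card_filter_adj_sub_two_le [DecidableEq V] [DecidableRel G.Adj]
    (hP : ∀ l, IsPathIn G A l → l.length ≤ 5) :
    2 * ∑ v ∈ A, (#{w ∈ A | G.Adj v w} - 2) ≤ ∑ v ∈ A, #{w ∈ A | G.Adj v w} := by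
  induction A using Finset.strongInduction with
  | H A ih =>
  by_cases hlow : ∃ v ∈ A, #{w ∈ A | G.Adj v w} ≤ 2
  · obtain ⟨v, hv, hv2⟩ := hlow
    set A' := A.erase v
    have IH := ih A' (erase_ssubset hv) (fun l hl => hP l (hl.mono (erase_subset v A)))
    have hdeg : ∀ w,
        #{x ∈ A | G.Adj w x} = (if G.Adj w v then 1 else 0) + #{x ∈ A' | G.Adj w x} := by
      intro w
      rw [card_filter, card_filter, ← add_sum_erase _ _ hv]
    have hsym : ∑ w ∈ A', (if G.Adj w v then 1 else 0) = #{w ∈ A | G.Adj v w} := by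
      rw [← card_filter, filter_erase, erase_eq_of_notMem (by simp)]
      simp_rw [G.adj_comm]
    calc 2 * ∑ w ∈ A, (#{x ∈ A | G.Adj w x} - 2)
        = 2 * ∑ w ∈ A', (#{x ∈ A | G.Adj w x} - 2) := by
          rw [← add_sum_erase _ _ hv, Nat.sub_eq_zero_of_le hv2, zero_add]
      _ ≤ 2 * ∑ w ∈ A', ((#{x ∈ A' | G.Adj w x} - 2) + if G.Adj w v then 1 else 0) := by
          gcongr with w
          rw [hdeg]
          split <;> omega
      _ ≤ ∑ w ∈ A', #{x ∈ A' | G.Adj w x} + 2 * #{w ∈ A | G.Adj v w} := by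
          rw [sum_add_distrib, hsym]
          omega
      _ = ∑ w ∈ A, #{x ∈ A | G.Adj w x} := by
          rw [← add_sum_erase _ _ hv, sum_congr rfl fun w _ => hdeg w, sum_add_distrib, hsym]
          ring
  · push Not at hlow
    rw [mul_sum]
    refine sum_le_sum fun v hv => ?_
    have := card_filter_adj_le_four hP hlow hv
    have := hlow v hv
    omega

theorem IsPathIn.length_le_five_of_h7Free [Fintype V] [DecidableRel G.Adj] (hfree : H7Free G)
    {u : V} {l : List V} (hl : IsPathIn G (G.neighborFinset u) l) : l.length ≤ 5 := by
  obtain ⟨hc, hn, hu⟩ := hl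
  by_contra! hlen
  obtain ⟨w₀, w₁, w₂, w₃, w₄, w₅, rest, rfl⟩ :
      ∃ w₀ w₁ w₂ w₃ w₄ w₅ rest, l = w₀ :: w₁ :: w₂ :: w₃ :: w₄ :: w₅ :: rest := by
    rcases l with _ | ⟨w₀, _ | ⟨w₁, _ | ⟨w₂, _ | ⟨w₃, _ | ⟨w₄, _ | ⟨w₅, rest⟩⟩⟩⟩⟩⟩ <;>
      simp_all
  simp only [List.isChain_cons_cons] at hc
  simp only [List.mem_cons, SimpleGraph.mem_neighborFinset, forall_eq_or_imp] at hu
  have hnu : ([w₀, w₁, w₂, w₃, w₄, w₅, u] : List V).Nodup := by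
    simp only [List.nodup_cons, List.mem_cons] at hn ⊢
    refine ⟨?_, ?_, ?_, ?_, ?_, ?_, ?_⟩ <;> simp_all [G.ne_of_adj, ne_comm]
  refine hfree ⟨([w₀, w₁, w₂, w₃, w₄, w₅, u] : List V).get,
    List.nodup_iff_injective_get.mp hnu, fun a b hab => ?_⟩
  fin_cases a <;> fin_cases b <;> simp_all [fanH7, G.adj_comm]

theorem sub_two_mul_le_cast_sub_mul (n : ℕ) {a b : ℝ} (ha : 0 ≤ a) (hab : a ≤ b) :
    ((n : ℝ) - 2) * a ≤ ((n - 2 : ℕ) : ℝ) * b := by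
  rcases le_total n 2 with hn | hn
  · have hn' : (n : ℝ) ≤ 2 := by exact_mod_cast hn
    rw [Nat.sub_eq_zero_of_le hn, Nat.cast_zero, zero_mul]
    exact mul_nonpos_of_nonpos_of_nonneg (by linarith) ha
  · have hn' : (2 : ℝ) ≤ n := by exact_mod_cast hn
    rw [Nat.cast_sub hn, Nat.cast_two]
    exact mul_le_mul_of_nonneg_left hab (by linarith)

section Counting

variable (G) [DecidableRel G.Adj]

theorem sum_card_filter_adj_comm (S T : Finset V) :
    ∑ w ∈ S, #{v ∈ T | G.Adj w v} = ∑ w ∈ T, #{v ∈ S | G.Adj w v} := by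
  simp_rw [card_filter]
  rw [sum_comm]
  simp_rw [G.adj_comm]

variable [Fintype V]

theorem sum_sum_neighborFinset {M : Type*} [AddCommMonoid M] (S : Finset V) (f : V → M) :
    ∑ v ∈ S, ∑ w ∈ G.neighborFinset v, f w = ∑ w, #{v ∈ S | G.Adj w v} • f w := by
  simp_rw [SimpleGraph.neighborFinset_eq_filter, sum_filter]
  rw [sum_comm]
  refine sum_congr rfl fun w _ => ?_
  rw [← sum_filter, sum_const]
  simp_rw [G.adj_comm]

variable [DecidableEq V]

theorem sum_eq_add_sum_neighborFinset_add_sum {M : Type*} [AddCommMonoid M] (u : V)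
    (f : V → M) :
    ∑ w, f w = f u + ∑ w ∈ G.neighborFinset u, f w
      + ∑ w ∈ univ \ insert u (G.neighborFinset u), f w := by
  rw [← sum_sdiff (subset_univ (insert u (G.neighborFinset u))),
    sum_insert (G.notMem_neighborFinset_self u)]
  abel

theorem two_mul_edgesIn_eq (S : Finset V) :
    2 * edgesIn G S = ∑ v ∈ S, #{w ∈ S | G.Adj v w} := by
  classical
  set H := SimpleGraph.fromEdgeSet {e ∈ G.edgeSet | ∀ v ∈ e, v ∈ (S : Set V)}
  have hE : 2 * edgesIn G S = ∑ v, H.degree v := by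
    rw [H.sum_degrees_eq_twice_card_edges, edgesIn, ← Set.ncard_coe_finset,
      SimpleGraph.coe_edgeFinset, SimpleGraph.edgeSet_fromEdgeSet, sdiff_eq_left.2]
    exact Set.disjoint_left.2 fun e he => G.not_isDiag_of_mem_edgeSet he.1
  have hdeg : ∀ v, H.degree v = if v ∈ S then #{w ∈ S | G.Adj v w} else 0 := by
    intro v
    rw [← SimpleGraph.card_neighborFinset_eq_degree]
    split_ifs with hv
    · congr 1; ext w; simpa [H, hv, and_comm] using fun _ h => G.ne_of_adj h
    · rw [card_eq_zero, eq_empty_iff_forall_notMem]; simp [H, hv]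
  rw [hE, sum_congr rfl fun v _ => hdeg v, sum_ite_mem, univ_inter]

theorem two_mul_card_edgeFinset_eq (u : V) :
    2 * #G.edgeFinset = 2 * #(G.neighborFinset u)
      + ∑ w ∈ G.neighborFinset u, #{v ∈ G.neighborFinset u | G.Adj w v}
      + 2 * ∑ w ∈ univ \ insert u (G.neighborFinset u), #{v ∈ G.neighborFinset u | G.Adj w v}
      + 2 * edgesIn G ↑(univ \ insert u (G.neighborFinset u)) := by
  set A := G.neighborFinset u
  set B := univ \ insert u A
  have hdeg : ∀ S : Finset V, ∑ v ∈ S, G.degree v = ∑ w, #{v ∈ S | G.Adj w v} := fun S => by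
    simpa only [sum_const, smul_eq_mul, mul_one, G.card_neighborFinset_eq_degree] using
      sum_sum_neighborFinset G S (fun _ => (1 : ℕ))
  have huA : #{v ∈ A | G.Adj u v} = #A := by
    rw [filter_true_of_mem fun v hv => (G.mem_neighborFinset u v).1 hv]
  have huB : #{v ∈ B | G.Adj u v} = 0 :=
    card_eq_zero.2 (filter_eq_empty_iff.2 fun v hv huv => by simp [B, A, huv] at hv)
  have split : ∀ f : V → ℕ, ∑ w, f w = f u + ∑ w ∈ A, f w + ∑ w ∈ B, f w :=
    sum_eq_add_sum_neighborFinset_add_sum G u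
  have handshake := G.sum_degrees_eq_twice_card_edges
  have hsplit := split fun w => G.degree w
  have hsplitA := split fun w => #{v ∈ A | G.Adj w v}
  have hsplitB := split fun w => #{v ∈ B | G.Adj w v}
  have hAB := sum_card_filter_adj_comm G A B
  have hBB := two_mul_edgesIn_eq G B
  have hu : #A = G.degree u := G.card_neighborFinset_eq_degree u
  beta_reduce at hsplit hsplitA hsplitB
  have hdegA := hdeg A
  have hdegB := hdeg B
  omega

variable {G}

theorem sq_sub_two_mul_le_of_mulVec_eq {x : V → ℝ} {ρ : ℝ} (heig : G.adjMatrix ℝ *ᵥ x = ρ • x)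
    (hpos : ∀ v, 0 < x v) {u : V} (hmax : ∀ v, x v ≤ x u) :
    ρ ^ 2 - 2 * ρ ≤ #(G.neighborFinset u)
      + ∑ w ∈ G.neighborFinset u, ((#{v ∈ G.neighborFinset u | G.Adj w v} - 2 : ℕ) : ℝ)
      + ∑ w ∈ univ \ insert u (G.neighborFinset u),
          (#{v ∈ G.neighborFinset u | G.Adj w v} : ℝ) := by
  set A := G.neighborFinset u
  set B := univ \ insert u A
  have hnbr : ∀ v, ∑ w ∈ G.neighborFinset v, x w = ρ * x v := fun v => by
    simpa using congrFun heig v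
  have h1 : ρ * x u = ∑ v ∈ A, x v := (hnbr u).symm
  have h2 : ρ * (ρ * x u) = #A * x u + ∑ w ∈ A, (#{v ∈ A | G.Adj w v} : ℝ) * x w
      + ∑ w ∈ B, (#{v ∈ A | G.Adj w v} : ℝ) * x w := by
    rw [h1, mul_sum]
    simp_rw [← hnbr]
    rw [sum_sum_neighborFinset, sum_eq_add_sum_neighborFinset_add_sum G u,
      filter_true_of_mem fun v hv => (G.mem_neighborFinset u v).1 hv]
    simp only [nsmul_eq_mul]
    rfl
  have hsplit : ∑ w ∈ A, ((#{v ∈ A | G.Adj w v} : ℝ) - 2) * x w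
      = ∑ w ∈ A, (#{v ∈ A | G.Adj w v} : ℝ) * x w - 2 * ∑ w ∈ A, x w := by
    rw [mul_sum, ← sum_sub_distrib]
    exact sum_congr rfl fun _ _ => by ring
  have key : (ρ ^ 2 - 2 * ρ) * x u ≤ (#A + ∑ w ∈ A, ((#{v ∈ A | G.Adj w v} - 2 : ℕ) : ℝ)
      + ∑ w ∈ B, (#{v ∈ A | G.Adj w v} : ℝ)) * x u := by
    calc (ρ ^ 2 - 2 * ρ) * x u
        = #A * x u + ∑ w ∈ A, ((#{v ∈ A | G.Adj w v} : ℝ) - 2) * x w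
          + ∑ w ∈ B, (#{v ∈ A | G.Adj w v} : ℝ) * x w := by
          rw [hsplit]
          linear_combination h2 - 2 * h1
      _ ≤ #A * x u + ∑ w ∈ A, ((#{v ∈ A | G.Adj w v} - 2 : ℕ) : ℝ) * x u
          + ∑ w ∈ B, (#{v ∈ A | G.Adj w v} : ℝ) * x u := by
          refine add_le_add (add_le_add le_rfl (sum_le_sum fun w _ => ?_))
            (sum_le_sum fun w _ => ?_)
          · exact sub_two_mul_le_cast_sub_mul _ (hpos w).le (hmax w)
          · exact mul_le_mul_of_nonneg_left (hmax w) (Nat.cast_nonneg _)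
      _ = _ := by rw [add_mul, add_mul, sum_mul, sum_mul]
  exact le_of_mul_le_mul_right key (hpos u)

end Counting

end

theorem edges_B_le_three_general (m : ℕ) {V : Type} [Fintype V] [DecidableEq V]
    (G : SimpleGraph V) [DecidableRel G.Adj]
    (hsize : G.edgeFinset.card = m) (hfree : H7Free G)
    (x : V → ℝ) (hpos : ∀ v, 0 < x v) (heig : G.adjMatrix ℝ *ᵥ x = specRad G • x)
    (ustar : V) (hmax : ∀ v, x v ≤ x ustar)
    (B : Finset V)
    (hB : B = Finset.univ \ insert ustar (G.neighborFinset ustar))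
    (hrho : (specRad G) ^ 2 - 2 * specRad G ≥ (m : ℝ) - 3) :
    edgesIn G (B : Set V) ≤ 3 := by
  subst hB hsize
  have hspec := sq_sub_two_mul_le_of_mulVec_eq heig hpos hmax
  have hcount := congrArg (Nat.cast : ℕ → ℝ) (two_mul_card_edgeFinset_eq G ustar)
  have hcomb := (Nat.cast_le (α := ℝ)).2 <| two_mul_sum_card_filter_adj_sub_two_le
    fun l (hl : IsPathIn G (G.neighborFinset ustar) l) => hl.length_le_five_of_h7Free hfree
  simp only [Nat.cast_add, Nat.cast_mul, Nat.cast_sum, Nat.cast_ofNat] at hcount hcomb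
  have : (edgesIn G ↑(univ \ insert ustar (G.neighborFinset ustar)) : ℝ) ≤ 3 := by linarith
  exact_mod_cast this

/-- For a connected `H₇`-free graph `G` with `m` edges, a Perron vector `x`
maximized at `u*`, `A = N(u*)` and `B = V ∖ (A ∪ {u*})`: if `ρ² − 2ρ ≥ m − 3`,
then `e(B) ≤ 3`. -/
theorem edges_B_le_three (m : ℕ) {V : Type} [Fintype V] [DecidableEq V]
    (G : SimpleGraph V) [DecidableRel G.Adj] (hconn : G.Connected)
    (hsize : G.edgeFinset.card = m) (hfree : H7Free G)
    (x : V → ℝ) (hpos : ∀ v, 0 < x v) (heig : G.adjMatrix ℝ *ᵥ x = specRad G • x)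
    (ustar : V) (hmax : ∀ v, x v ≤ x ustar)
    (B : Finset V)
    (hB : B = Finset.univ \ insert ustar (G.neighborFinset ustar))
    (hrho : (specRad G) ^ 2 - 2 * specRad G ≥ (m : ℝ) - 3) :
    edgesIn G (B : Set V) ≤ 3 :=
  edges_B_le_three_general m G hsize hfree x hpos heig ustar hmax B hB hrho
end

section
/- Let G be a finite simple graph that is H_7-free. Suppose u*, u_1, u_2, u_3, u_4, u_5 are six distinct vertices such that u* is adjacent to each u_i and {u_1, u_2, u_3, u_4, u_5} is a clique (every pair u_i, u_j with i ≠ j is adjacent). Then every vertex w ∉ {u*, u_1, …, u_5} has at most one neighbor among {u_1, u_2, u_3, u_4, u_5}. -/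
open Matrix Finset

/-! If `w` had two neighbours `a ≠ b` in the clique `K`, choose three further clique vertices
`c, d, e`: then `a` is adjacent to every vertex of the path `w - b - c - d - e - z`, which is a
copy of the fan `H₇` with hub `a`. -/

section

open SimpleGraph

variable {V : Type*} {G : SimpleGraph V}

theorem containsSub_fanH7_of_hub_path {p : Fin 6 → V} (z : V) (hp : Function.Injective p)
    (hpath : ∀ i : Fin 5, G.Adj (p i.castSucc) (p i.succ)) (hhub : ∀ i, G.Adj z (p i)) :
    ContainsSub fanH7 G := by
  have hstep : ∀ k l : Fin 6, (l : ℕ) = k + 1 → G.Adj (p k) (p l) := by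
    intro k l hkl
    convert hpath ⟨k, by omega⟩ using 2 <;> ext <;> simp [hkl]
  have hlast : (Fin.snoc p z : Fin 7 → V) 6 = z := Fin.snoc_last (α := fun _ ↦ V) z p
  refine ⟨Fin.snoc p z, Fin.snoc_injective_of_injective hp ?_, ?_⟩
  · rintro ⟨i, rfl⟩
    exact (hhub i).ne rfl
  intro i j hij
  induction i using Fin.lastCases with
  | last =>
    induction j using Fin.lastCases with
    | last => exact absurd rfl hij.ne
    | cast l => simpa [hlast] using hhub l
  | cast k =>
    induction j using Fin.lastCases with
    | last => simpa [hlast] using (hhub k).symm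
    | cast l =>
      simp only [Fin.snoc_castSucc]
      simp only [fanH7, fromRel_adj, Fin.val_castSucc, Fin.isValue] at hij
      rcases hij.2 with (h | h | h) | (h | h | h)
      all_goals first
        | exact absurd h (Fin.castSucc_ne_last _)
        | exact hstep k l h
        | exact (hstep l k h).symm

theorem H7Free.card_filter_adj_le_one [DecidableEq V] [DecidableRel G.Adj]
    (hfree : H7Free G) {K : Finset V} (hK : 5 ≤ #K) (hclique : G.IsClique (K : Set V))
    {z : V} (hz : ∀ u ∈ K, G.Adj z u) {w : V} (hwz : w ≠ z) (hwK : w ∉ K) :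
    #(K.filter (G.Adj w)) ≤ 1 := by
  rw [card_le_one]
  intro a ha b hb
  simp only [mem_filter] at ha hb
  by_contra hab
  have hrest : 2 < #((K.erase a).erase b) := by
    rw [card_erase_of_mem (mem_erase.2 ⟨Ne.symm hab, hb.1⟩), card_erase_of_mem ha.1]
    omega
  obtain ⟨c, hc, d, hd, e, he, hcd, hce, hde⟩ := two_lt_card.1 hrest
  simp only [mem_erase] at hc hd he
  have hzK : z ∉ K := fun h ↦ (hz z h).ne rfl
  apply hfree
  refine containsSub_fanH7_of_hub_path (p := ![w, b, c, d, e, z]) a ?_ ?_ ?_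
  · rw [← List.nodup_ofFn]
    simp only [List.ofFn_succ, List.ofFn_zero, cons_val_zero, cons_val_succ, List.nodup_cons,
      List.mem_cons, List.not_mem_nil]
    grind
  · simp only [Fin.forall_fin_succ]
    exact ⟨hb.2, hclique hb.1 hc.2.2 (Ne.symm hc.1), hclique hc.2.2 hd.2.2 hcd,
      hclique hd.2.2 he.2.2 hde, (hz e he.2.2).symm, fun i ↦ i.elim0⟩
  · simp only [Fin.forall_fin_succ]
    exact ⟨ha.2.symm, hclique ha.1 hb.1 hab, hclique ha.1 hc.2.2 (Ne.symm hc.2.1),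
      hclique ha.1 hd.2.2 (Ne.symm hd.2.1), hclique ha.1 he.2.2 (Ne.symm he.2.1),
      (hz a ha.1).symm, fun i ↦ i.elim0⟩

end

/-- In an `H₇`-free graph, if `u*` is adjacent to each vertex of a
5-clique `{u₁,…,u₅}`, then any vertex outside `{u*,u₁,…,u₅}` has at most one neighbor
in `{u₁,…,u₅}`. -/
theorem h7_free_clique_outside_nbrs {V : Type} [DecidableEq V]
    (G : SimpleGraph V) [DecidableRel G.Adj] (hfree : H7Free G)
    (ustar u1 u2 u3 u4 u5 : V)
    (hdistinct : ({ustar, u1, u2, u3, u4, u5} : Finset V).card = 6)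
    (hstar : ∀ u ∈ ({u1, u2, u3, u4, u5} : Finset V), G.Adj ustar u)
    (hclique : ∀ u ∈ ({u1, u2, u3, u4, u5} : Finset V),
      ∀ v ∈ ({u1, u2, u3, u4, u5} : Finset V), u ≠ v → G.Adj u v)
    (w : V) (hw : w ∉ ({ustar, u1, u2, u3, u4, u5} : Finset V)) :
    (({u1, u2, u3, u4, u5} : Finset V).filter (fun u => G.Adj w u)).card ≤ 1 := by
  have hcard : 5 ≤ #({u1, u2, u3, u4, u5} : Finset V) := by
    have := card_insert_le ustar ({u1, u2, u3, u4, u5} : Finset V)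
    omega
  rw [mem_insert, not_or] at hw
  exact hfree.card_filter_adj_le_one hcard (fun u hu v hv ↦ hclique u hu v hv)
    hstar hw.1 hw.2
end

section
/- Let G be a finite simple graph that is H_7-free. Suppose u*, u_1, u_2, u_3, u_4, u_5 are six distinct vertices such that u* is adjacent to each u_i and the pairs among {u_1, …, u_5} are all adjacent except that u_4 and u_5 are not adjacent (so {u_1,…,u_5} induces K_5 minus the edge u_4u_5). Then every vertex w ∉ {u*, u_1, …, u_5} that is adjacent to at least one of u_1, u_2, u_3 has exactly one neighbor in {u_1, u_2, u_3} and no neighbor in {u_4, u_5}. -/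
open Matrix Finset

/-! If `w` is adjacent to `x ∈ {u₁, u₂, u₃}` and `y, z` are the other two, the neighbourhood
of `x` contains the wheel with centre `u*` and rim `y u₄ z u₅`. Each rim vertex starts a
Hamiltonian path of this wheel ending at the centre, so an edge from `w` to a rim vertex yields a
path on six vertices in the neighbourhood of `x`: a copy of `K₁ ∨ P₆` with apex `x`. -/

theorem containsSub_fanH7_of_adj_path {V : Type*} {G : SimpleGraph V} {h p₀ p₁ p₂ p₃ p₄ p₅ : V}
    (hp : [p₀, p₁, p₂, p₃, p₄, p₅].Nodup) (hhub : ∀ p ∈ [p₀, p₁, p₂, p₃, p₄, p₅], G.Adj h p)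
    (h₀₁ : G.Adj p₀ p₁) (h₁₂ : G.Adj p₁ p₂) (h₂₃ : G.Adj p₂ p₃) (h₃₄ : G.Adj p₃ p₄)
    (h₄₅ : G.Adj p₄ p₅) :
    ContainsSub fanH7 G := by
  have hh : h ∉ [p₀, p₁, p₂, p₃, p₄, p₅] := fun hm => (hhub h hm).ne rfl
  refine ⟨![p₀, p₁, p₂, p₃, p₄, p₅, h], List.nodup_ofFn.mp ?_, ?_⟩
  · simpa [List.ofFn_succ] using hp.concat hh
  · intro i j hij
    simp only [List.mem_cons, List.not_mem_nil, or_false, forall_eq_or_imp, forall_eq] at hhub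
    rw [fanH7, SimpleGraph.fromRel_adj] at hij
    fin_cases i <;> fin_cases j <;> simp_all [G.adj_comm]

theorem H7Free.not_adj_rim_of_wheel {V : Type*} {G : SimpleGraph V} (hfree : H7Free G)
    {x w s c₀ c₁ c₂ c₃ : V} (hnd : [w, s, c₀, c₁, c₂, c₃].Nodup)
    (hx : ∀ v ∈ [w, s, c₀, c₁, c₂, c₃], G.Adj x v) (hs : ∀ c ∈ [c₀, c₁, c₂, c₃], G.Adj c s)
    (h₀₁ : G.Adj c₀ c₁) (h₁₂ : G.Adj c₁ c₂) (h₂₃ : G.Adj c₂ c₃) (h₃₀ : G.Adj c₃ c₀) :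
    ¬ G.Adj w c₀ ∧ ¬ G.Adj w c₁ ∧ ¬ G.Adj w c₂ ∧ ¬ G.Adj w c₃ := by
  simp only [List.mem_cons, List.not_mem_nil, or_false, forall_eq_or_imp, forall_eq] at hs
  obtain ⟨hs₀, hs₁, hs₂, hs₃⟩ := hs
  refine ⟨fun hw => hfree (containsSub_fanH7_of_adj_path (h := x) ?_ ?_ hw h₀₁ h₁₂ h₂₃ hs₃),
    fun hw => hfree (containsSub_fanH7_of_adj_path (h := x) ?_ ?_ hw h₁₂ h₂₃ h₃₀ hs₀),
    fun hw => hfree (containsSub_fanH7_of_adj_path (h := x) ?_ ?_ hw h₂₃ h₃₀ h₀₁ hs₁),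
    fun hw => hfree (containsSub_fanH7_of_adj_path (h := x) ?_ ?_ hw h₃₀ h₀₁ h₁₂ hs₂)⟩
  all_goals first
    | exact fun v hv => hx v (by simp at hv ⊢; tauto)
    | simp at hnd ⊢; grind

theorem h7_free_k5e_outside_nbrs_general {V : Type} [DecidableEq V]
    (G : SimpleGraph V) [DecidableRel G.Adj] (hfree : H7Free G)
    (ustar u1 u2 u3 u4 u5 : V)
    (hdistinct : ({ustar, u1, u2, u3, u4, u5} : Finset V).card = 6)
    (hstar : ∀ u ∈ ({u1, u2, u3, u4, u5} : Finset V), G.Adj ustar u)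
    (h12 : G.Adj u1 u2) (h13 : G.Adj u1 u3) (h14 : G.Adj u1 u4) (h15 : G.Adj u1 u5)
    (h23 : G.Adj u2 u3) (h24 : G.Adj u2 u4) (h25 : G.Adj u2 u5)
    (h34 : G.Adj u3 u4) (h35 : G.Adj u3 u5)
    (w : V) (hw : w ∉ ({ustar, u1, u2, u3, u4, u5} : Finset V))
    (hadj : G.Adj w u1 ∨ G.Adj w u2 ∨ G.Adj w u3) :
    (({u1, u2, u3} : Finset V).filter (fun u => G.Adj w u)).card = 1 ∧
      ¬ G.Adj w u4 ∧ ¬ G.Adj w u5 := by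
  have hnd : [w, ustar, u1, u2, u3, u4, u5].Nodup := by
    have h6 : #(([ustar, u1, u2, u3, u4, u5] : Multiset V).toFinset) = 6 := by simpa using hdistinct
    refine List.nodup_cons.mpr ⟨by simpa using hw, ?_⟩
    exact Multiset.coe_nodup.mp (Multiset.toFinset_card_eq_card_iff_nodup.mp h6)
  simp only [List.nodup_cons, List.mem_cons, List.not_mem_nil, or_false, not_or,
    List.nodup_nil, and_true] at hnd
  obtain ⟨s1, s2, s3, s4, s5⟩ : G.Adj u1 ustar ∧ G.Adj u2 ustar ∧ G.Adj u3 ustar ∧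
      G.Adj u4 ustar ∧ G.Adj u5 ustar := by simpa [G.adj_comm ustar] using hstar
  rcases hadj with hwx | hwx | hwx
  · obtain ⟨h2, h4, h3, h5⟩ := hfree.not_adj_rim_of_wheel (x := u1) (w := w) (s := ustar)
      (by simp; grind) (by simp [*, hwx.symm]) (by simp [*])
      h24 h34.symm h35 h25.symm
    simp [Finset.filter_insert, Finset.filter_singleton, *]
  · obtain ⟨h1, h4, h3, h5⟩ := hfree.not_adj_rim_of_wheel (x := u2) (w := w) (s := ustar)
      (by simp; grind) (by simp [*, hwx.symm, h12.symm]) (by simp [*])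
      h14 h34.symm h35 h15.symm
    simp [Finset.filter_insert, Finset.filter_singleton, *]
  · obtain ⟨h1, h4, h2, h5⟩ := hfree.not_adj_rim_of_wheel (x := u3) (w := w) (s := ustar)
      (by simp; grind) (by simp [*, hwx.symm, h13.symm, h23.symm]) (by simp [*])
      h14 h24.symm h25 h15.symm
    simp [Finset.filter_insert, Finset.filter_singleton, *]

/-- In an `H₇`-free graph, if `u*` is adjacent to each vertex of a copy of
`K₅ − e` on `{u₁,…,u₅}` (with the missing edge `u₄u₅`), then any outside vertex adjacent to
one of `u₁,u₂,u₃` has exactly one neighbor in `{u₁,u₂,u₃}` and none in `{u₄,u₅}`. -/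
theorem h7_free_k5e_outside_nbrs {V : Type} [DecidableEq V]
    (G : SimpleGraph V) [DecidableRel G.Adj] (hfree : H7Free G)
    (ustar u1 u2 u3 u4 u5 : V)
    (hdistinct : ({ustar, u1, u2, u3, u4, u5} : Finset V).card = 6)
    (hstar : ∀ u ∈ ({u1, u2, u3, u4, u5} : Finset V), G.Adj ustar u)
    (h12 : G.Adj u1 u2) (h13 : G.Adj u1 u3) (h14 : G.Adj u1 u4) (h15 : G.Adj u1 u5)
    (h23 : G.Adj u2 u3) (h24 : G.Adj u2 u4) (h25 : G.Adj u2 u5)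
    (h34 : G.Adj u3 u4) (h35 : G.Adj u3 u5) (h45 : ¬ G.Adj u4 u5)
    (w : V) (hw : w ∉ ({ustar, u1, u2, u3, u4, u5} : Finset V))
    (hadj : G.Adj w u1 ∨ G.Adj w u2 ∨ G.Adj w u3) :
    (({u1, u2, u3} : Finset V).filter (fun u => G.Adj w u)).card = 1 ∧
      ¬ G.Adj w u4 ∧ ¬ G.Adj w u5 :=
  h7_free_k5e_outside_nbrs_general G hfree ustar u1 u2 u3 u4 u5 hdistinct hstar h12 h13 h14 h15 h23
    h24 h25 h34 h35 w hw hadj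
end

section
/- Let G be a connected finite simple graph with m ≥ 33 edges, x a Perron vector of G, and u* a vertex at which x attains its maximum. Set A = N(u*), A_0 = {u ∈ A : u has no neighbor in A}, and A_+ = A \ A_0. If ρ(G) ≥ 1 + √(m − 2), then e(A_+) ≥ 11. -/
open Matrix Finset

/-!
Count walks of length two from `u*`:
`ρ² x(u*) = ∑_{v ∈ A} ∑_{w ∼ v} x(w) ≤ x(u*) ∑_{v ∈ A} d(v)`,
and `∑_{v ∈ A} d(v) ≤ m + e(A)` since an edge is counted once for each of its ends in `A`.
For `m ≥ 33` we have `(1 + √(m - 2))² > m + 10`, hence `e(A) ≥ 11`.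
Finally `e(A₊) = e(A)`: both ends of an edge inside `A` have a neighbour in `A`.
-/

namespace SimpleGraph

variable {V : Type*} (G : SimpleGraph V)

theorem edgesIn_setOf_mem_and_exists_adj (S : Set V) :
    edgesIn G {u | u ∈ S ∧ ∃ w ∈ S, G.Adj u w} = edgesIn G S := by
  unfold edgesIn
  congr 1
  ext e
  induction e using Sym2.ind with
  | _ a b =>
    simp only [Set.mem_ofPred_eq, mem_edgeSet, Sym2.mem_iff, forall_eq_or_imp, forall_eq]
    constructor
    · rintro ⟨hab, ⟨ha, -⟩, hb, -⟩
      exact ⟨hab, ha, hb⟩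
    · rintro ⟨hab, ha, hb⟩
      exact ⟨hab, ⟨ha, b, hb, hab⟩, hb, a, ha, hab.symm⟩

variable [Fintype V] [DecidableRel G.Adj]

open Classical in
theorem edgesIn_coe_eq_card_filter (S : Finset V) :
    edgesIn G S = #{e ∈ G.edgeFinset | ∀ v ∈ e, v ∈ S} := by
  rw [edgesIn, ← Set.ncard_coe_finset]
  congr 1
  ext e
  simp

open Classical in
theorem card_filter_mem_le_one_add_ite (S : Finset V) (e : Sym2 V) :
    #{v ∈ S | v ∈ e} ≤ 1 + if ∀ v ∈ e, v ∈ S then 1 else 0 := by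
  induction e using Sym2.ind with
  | _ a b =>
    simp only [Sym2.mem_iff, forall_eq_or_imp, forall_eq]
    split_ifs with h
    · exact (card_le_card (t := {a, b}) fun v hv => by grind).trans card_le_two
    · rcases not_and_or.mp h with ha | hb
      · exact card_le_card (t := {b}) fun v hv => by grind
      · exact card_le_card (t := {a}) fun v hv => by grind

theorem sum_degree_le_card_edgeFinset_add_edgesIn (S : Finset V) :
    ∑ v ∈ S, G.degree v ≤ #G.edgeFinset + edgesIn G S := by
  classical
  have hdeg (v : V) : G.degree v = #{e ∈ G.edgeFinset | v ∈ e} := by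
    rw [← card_incidenceFinset_eq_degree, incidenceFinset_eq_filter]
  calc ∑ v ∈ S, G.degree v = ∑ e ∈ G.edgeFinset, #{v ∈ S | v ∈ e} := by
        simp only [hdeg, card_filter]
        exact sum_comm
    _ ≤ ∑ e ∈ G.edgeFinset, (1 + if ∀ v ∈ e, v ∈ S then 1 else 0) :=
        sum_le_sum fun e _ => card_filter_mem_le_one_add_ite S e
    _ = #G.edgeFinset + edgesIn G S := by
        rw [sum_add_distrib, edgesIn_coe_eq_card_filter, card_filter]
        simp

theorem sq_mul_le_sum_degree_mul {ρ : ℝ} {x : V → ℝ}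
    (heig : G.adjMatrix ℝ *ᵥ x = ρ • x) {u : V} (hmax : ∀ v, x v ≤ x u) :
    ρ ^ 2 * x u ≤ (∑ v ∈ G.neighborFinset u, (G.degree v : ℝ)) * x u := by
  have hwalks : ρ ^ 2 * x u = ∑ v ∈ G.neighborFinset u, ∑ w ∈ G.neighborFinset v, x w := by
    have h : G.adjMatrix ℝ *ᵥ (G.adjMatrix ℝ *ᵥ x) = ρ ^ 2 • x := by
      rw [heig, mulVec_smul, heig, smul_smul, sq]
    simpa only [adjMatrix_mulVec_apply, Pi.smul_apply, smul_eq_mul] using (congrFun h u).symm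
  rw [hwalks, sum_mul]
  refine sum_le_sum fun v _ => ?_
  calc ∑ w ∈ G.neighborFinset v, x w ≤ ∑ _w ∈ G.neighborFinset v, x u :=
        sum_le_sum fun w _ => hmax w
    _ = G.degree v * x u := by rw [sum_const, card_neighborFinset_eq_degree, nsmul_eq_mul]

end SimpleGraph

theorem add_ten_lt_one_add_sqrt_sub_two_sq {m : ℝ} (hm : 33 ≤ m) :
    m + 10 < (1 + √(m - 2)) ^ 2 := by
  have hs : (11 / 2 : ℝ) < √(m - 2) := Real.lt_sqrt_of_sq_lt (by linarith)
  nlinarith [Real.sq_sqrt (show (0 : ℝ) ≤ m - 2 by linarith)]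

theorem edges_Aplus_ge_eleven_general (m : ℕ) (hm : 33 ≤ m)
    {V : Type} [Fintype V] (G : SimpleGraph V) [DecidableRel G.Adj]
    (hsize : G.edgeFinset.card = m)
    (x : V → ℝ) (hpos : ∀ v, 0 < x v) (heig : G.adjMatrix ℝ *ᵥ x = specRad G • x)
    (ustar : V) (hmax : ∀ v, x v ≤ x ustar)
    (A Aplus : Finset V)
    (hA : A = G.neighborFinset ustar)
    (hAplus : Aplus = A.filter (fun u => ∃ w ∈ A, G.Adj u w))
    (hrho : 1 + Real.sqrt ((m : ℝ) - 2) ≤ specRad G) :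
    11 ≤ edgesIn G (Aplus : Set V) := by
  have hρ_sq : specRad G ^ 2 ≤ ∑ v ∈ A, (G.degree v : ℝ) := by
    rw [hA]
    exact le_of_mul_le_mul_right (G.sq_mul_le_sum_degree_mul heig hmax) (hpos ustar)
  have hcount : ∑ v ∈ A, (G.degree v : ℝ) ≤ m + edgesIn G A := by
    rw [← hsize]
    exact_mod_cast G.sum_degree_le_card_edgeFinset_add_edgesIn A
  have hedges_A : (m : ℝ) + 10 < m + edgesIn G A :=
    calc (m : ℝ) + 10 < (1 + √(m - 2)) ^ 2 :=
          add_ten_lt_one_add_sqrt_sub_two_sq (by exact_mod_cast hm)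
      _ ≤ specRad G ^ 2 := pow_le_pow_left₀ (by positivity) hrho 2
      _ ≤ m + edgesIn G A := hρ_sq.trans hcount
  have hAplus_edges : edgesIn G (Aplus : Set V) = edgesIn G A := by
    rw [hAplus, coe_filter]
    exact G.edgesIn_setOf_mem_and_exists_adj A
  rw [hAplus_edges]
  exact_mod_cast (show (10 : ℝ) < edgesIn G A by linarith)

/-- For a connected graph `G` with `m ≥ 33` edges, a Perron vector `x`
maximized at `u*`, `A = N(u*)` and `A₊` the vertices of `A` with a neighbor in `A`:
if `ρ(G) ≥ 1 + √(m − 2)`, then `e(A₊) ≥ 11`. -/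
theorem edges_Aplus_ge_eleven (m : ℕ) (hm : 33 ≤ m)
    {V : Type} [Fintype V] [DecidableEq V] (G : SimpleGraph V) [DecidableRel G.Adj]
    (hconn : G.Connected) (hsize : G.edgeFinset.card = m)
    (x : V → ℝ) (hpos : ∀ v, 0 < x v) (heig : G.adjMatrix ℝ *ᵥ x = specRad G • x)
    (ustar : V) (hmax : ∀ v, x v ≤ x ustar)
    (A Aplus : Finset V)
    (hA : A = G.neighborFinset ustar)
    (hAplus : Aplus = A.filter (fun u => ∃ w ∈ A, G.Adj u w))
    (hrho : 1 + Real.sqrt ((m : ℝ) - 2) ≤ specRad G) :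
    11 ≤ edgesIn G (Aplus : Set V) :=
  edges_Aplus_ge_eleven_general m hm G hsize x hpos heig ustar hmax A Aplus hA hAplus hrho
end
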